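/- arXiv:2201.12503 — 10 statements merged into one kernel-verified Lean document; each statement's English description precedes it below -/
import Mathlib

section
/- Let a, b, c ∈ ℂ with a ≠ c, and let b' := (a+c)/2 − ((c−a)/(conj(c)−conj(a)))·(conj(b) − (conj(a)+conj(c))/2) be the reflection of b in the perpendicular bisector of the segment joining a and c. Set z := b − a, w := c − b, z' := b' − a, w' := c − b'. Then z' + w' = z + w and z'·conj(w') = z·conj(w). -/
open Complex

/-- **Recutting relations.** Let `b'` be the reflection of `b` in the perpendicular
bisector of the segment joining `a` and `c`. Setting `z = b - a`, `w = c - b`,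
`z' = b' - a`, `w' = c - b'`, one has `z' + w' = z + w` and `z' * conj w' = z * conj w`. -/
theorem recutting_relations (a b c : ℂ) (hac : a ≠ c)
    (b' : ℂ)
    (hb' : b' = (a + c) / 2 -
      ((c - a) / ((starRingEnd ℂ) c - (starRingEnd ℂ) a)) *
        ((starRingEnd ℂ) b - ((starRingEnd ℂ) a + (starRingEnd ℂ) c) / 2)) :
    (b' - a) + (c - b') = (b - a) + (c - b) ∧
    (b' - a) * (starRingEnd ℂ) (c - b') = (b - a) * (starRingEnd ℂ) (c - b) := by
  have h : (starRingEnd ℂ) c - (starRingEnd ℂ) a ≠ 0 := by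
    intro h
    apply hac
    have : (starRingEnd ℂ) a = (starRingEnd ℂ) c := by linear_combination -h
    exact ((starRingEnd ℂ).injective this)
  constructor
  · ring
  · subst hb'
    simp only [map_sub, map_add, map_mul, map_div₀, Complex.conj_conj, map_ofNat]
    have h2 : c - a ≠ 0 := sub_ne_zero.mpr (Ne.symm hac)
    field_simp [h, h2]
    ring
end

section
/- Let z₀, z₁, z₂, z₃ ∈ ℂ be nonzero with z₁ + z₂ ≠ 0. Define z₁' := conj(z₂)·(z₁+z₂)/(conj(z₁)+conj(z₂)) and z₂' := conj(z₁)·(z₁+z₂)/(conj(z₁)+conj(z₂)). Set y₀ := z₁/z₀, y₁ := z₂/z₁, y₂ := z₃/z₂ and y₀' := z₁'/z₀, y₁' := z₂'/z₁', y₂' := z₃/z₂'. Then y₀' = y₀·(1+y₁)/(1+conj(y₁)⁻¹), y₁' = conj(y₁)⁻¹, and y₂' = y₂·(1+conj(y₁))/(1+y₁⁻¹). -/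
/-!
With `w = z₁ + z₂`, recutting replaces `(z₁, z₂)` by `(conj z₂ · w / conj w, conj z₁ · w / conj w)`:
up to the common factor `w / conj w` it reflects the pair. That factor cancels in `z₂' / z₁'`,
and the other two ratios are quotients of `1 + y₁ = w / z₁` and `1 + (conj y₁)⁻¹ = conj w / conj z₂`
(resp. `1 + conj y₁ = conj w / conj z₁` and `1 + y₁⁻¹ = w / z₂`).
-/

open ComplexConjugate

namespace Recutting

variable {K : Type*} [Field K] [StarRing K]

def recutFst (z₁ z₂ : K) : K := conj z₂ * (z₁ + z₂) / (conj z₁ + conj z₂)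

def recutSnd (z₁ z₂ : K) : K := conj z₁ * (z₁ + z₂) / (conj z₁ + conj z₂)

variable {z₁ z₂ : K}

theorem recutFst_div (h₁ : z₁ ≠ 0) (h₂ : z₂ ≠ 0) :
    recutFst z₁ z₂ / z₁ = (1 + z₂ / z₁) / (1 + (conj (z₂ / z₁))⁻¹) := by
  have hc₂ : conj z₂ ≠ 0 := (map_ne_zero _).2 h₂
  rw [recutFst, map_div₀, inv_div, one_add_div h₁, one_add_div hc₂, add_comm (conj z₂)]
  field_simp

theorem div_recutSnd (h₁ : z₁ ≠ 0) (h₂ : z₂ ≠ 0) :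
    z₂ / recutSnd z₁ z₂ = (1 + conj (z₂ / z₁)) / (1 + (z₂ / z₁)⁻¹) := by
  have hc₁ : conj z₁ ≠ 0 := (map_ne_zero _).2 h₁
  rw [recutSnd, map_div₀, inv_div, one_add_div h₂, one_add_div hc₁, add_comm z₂]
  field_simp

theorem recutSnd_div_recutFst (hsum : z₁ + z₂ ≠ 0) :
    recutSnd z₁ z₂ / recutFst z₁ z₂ = (conj (z₂ / z₁))⁻¹ := by
  have hc : conj z₁ + conj z₂ ≠ 0 := by rw [← map_add]; exact (map_ne_zero _).2 hsum
  rw [recutSnd, recutFst, div_div_div_cancel_right₀ hc, mul_div_mul_right _ _ hsum,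
    map_div₀, inv_div]

end Recutting

open Complex Recutting

theorem recutting_y_coords_general (z₀ z₁ z₂ z₃ : ℂ)
    (h₁ : z₁ ≠ 0) (h₂ : z₂ ≠ 0)
    (hsum : z₁ + z₂ ≠ 0)
    (z₁' z₂' : ℂ)
    (hz₁' : z₁' = (starRingEnd ℂ) z₂ * (z₁ + z₂) / ((starRingEnd ℂ) z₁ + (starRingEnd ℂ) z₂))
    (hz₂' : z₂' = (starRingEnd ℂ) z₁ * (z₁ + z₂) / ((starRingEnd ℂ) z₁ + (starRingEnd ℂ) z₂))
    (y₀ y₁ y₂ y₀' y₁' y₂' : ℂ)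
    (hy₀ : y₀ = z₁ / z₀) (hy₁ : y₁ = z₂ / z₁) (hy₂ : y₂ = z₃ / z₂)
    (hy₀' : y₀' = z₁' / z₀) (hy₁' : y₁' = z₂' / z₁') (hy₂' : y₂' = z₃ / z₂') :
    y₀' = y₀ * (1 + y₁) / (1 + ((starRingEnd ℂ) y₁)⁻¹) ∧
    y₁' = ((starRingEnd ℂ) y₁)⁻¹ ∧
    y₂' = y₂ * (1 + (starRingEnd ℂ) y₁) / (1 + y₁⁻¹) := by
  obtain rfl : z₁' = recutFst z₁ z₂ := hz₁'
  obtain rfl : z₂' = recutSnd z₁ z₂ := hz₂'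
  subst hy₀ hy₁ hy₂ hy₀' hy₁' hy₂'
  refine ⟨?_, recutSnd_div_recutFst hsum, ?_⟩
  · rw [mul_div_assoc (z₁ / z₀), ← recutFst_div h₁ h₂, div_mul_div_cancel₀' h₁]
  · rw [mul_div_assoc (z₃ / z₂), ← div_recutSnd h₁ h₂, div_mul_div_cancel₀ h₂]

/-- Recutting written in terms of the ratios `yᵢ` of consecutive edge vectors:
if `(z₁, z₂)` is replaced by `(z₁', z₂')` according to the recutting rule, then the
ratios transform by `y₀' = y₀ (1 + y₁)/(1 + conj y₁ ⁻¹)`, `y₁' = conj y₁ ⁻¹`,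
`y₂' = y₂ (1 + conj y₁)/(1 + y₁⁻¹)`. -/
theorem recutting_y_coords (z₀ z₁ z₂ z₃ : ℂ)
    (h₀ : z₀ ≠ 0) (h₁ : z₁ ≠ 0) (h₂ : z₂ ≠ 0) (h₃ : z₃ ≠ 0)
    (hsum : z₁ + z₂ ≠ 0)
    (z₁' z₂' : ℂ)
    (hz₁' : z₁' = (starRingEnd ℂ) z₂ * (z₁ + z₂) / ((starRingEnd ℂ) z₁ + (starRingEnd ℂ) z₂))
    (hz₂' : z₂' = (starRingEnd ℂ) z₁ * (z₁ + z₂) / ((starRingEnd ℂ) z₁ + (starRingEnd ℂ) z₂))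
    (y₀ y₁ y₂ y₀' y₁' y₂' : ℂ)
    (hy₀ : y₀ = z₁ / z₀) (hy₁ : y₁ = z₂ / z₁) (hy₂ : y₂ = z₃ / z₂)
    (hy₀' : y₀' = z₁' / z₀) (hy₁' : y₁' = z₂' / z₁') (hy₂' : y₂' = z₃ / z₂') :
    y₀' = y₀ * (1 + y₁) / (1 + ((starRingEnd ℂ) y₁)⁻¹) ∧
    y₁' = ((starRingEnd ℂ) y₁)⁻¹ ∧
    y₂' = y₂ * (1 + (starRingEnd ℂ) y₁) / (1 + y₁⁻¹) :=
  recutting_y_coords_general z₀ z₁ z₂ z₃ h₁ h₂ hsum z₁' z₂' hz₁' hz₂' y₀ y₁ y₂ y₀' y₁' y₂' hy₀ hy₁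
    hy₂ hy₀' hy₁' hy₂'
end

section
/- Let f, g ∈ ℍ[t] be polynomials over the quaternions and let α ∈ ℍ be such that β := evʳ_g(α) ≠ 0. Then evʳ_{f·g}(α) = evʳ_f(β·α·β⁻¹)·β. -/
open Polynomial

/-- Right evaluation of a quaternionic polynomial `f` at `β`:
`evʳ_f(β) = Σ_k f_k β^k`, coefficients on the left. -/
noncomputable def evalR (β : Quaternion ℝ) (f : Polynomial (Quaternion ℝ)) : Quaternion ℝ :=
  ∑ k ∈ Finset.range (f.natDegree + 1), f.coeff k * β ^ k

lemma evalR_eq_eval (β : Quaternion ℝ) (f : Polynomial (Quaternion ℝ)) :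
    evalR β f = f.eval β := by
  rw [evalR, Polynomial.eval_eq_sum_range]

lemma eval_X_pow_mul (g : Polynomial (Quaternion ℝ)) (α : Quaternion ℝ)
    (hne : g.eval α ≠ 0) (n : ℕ) :
    (X ^ n * g).eval α = (g.eval α * α * (g.eval α)⁻¹) ^ n * g.eval α := by
  induction n with
  | zero => simp
  | succ n ih =>
    have h1 : X ^ (n + 1) * g = (X ^ n * g) * X := by
      rw [pow_succ, mul_assoc, X_mul, ← mul_assoc]
    rw [h1, eval_mul_X, ih]
    simp only [pow_succ, mul_assoc, inv_mul_cancel₀ hne, mul_one]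

lemma eval_mul_key (f g : Polynomial (Quaternion ℝ)) (α : Quaternion ℝ)
    (hne : g.eval α ≠ 0) :
    (f * g).eval α = f.eval (g.eval α * α * (g.eval α)⁻¹) * g.eval α := by
  induction f using Polynomial.induction_on' with
  | add p q hp hq => rw [add_mul, eval_add, hp, hq, eval_add, add_mul]
  | monomial n a =>
    have h1 : (monomial n a : Polynomial (Quaternion ℝ)) * g = C a * (X ^ n * g) := by
      rw [← mul_assoc, ← Polynomial.C_mul_X_pow_eq_monomial]
    rw [h1, eval_C_mul, eval_X_pow_mul g α hne n, eval_monomial, ← mul_assoc]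

/-- The product formula for right evaluation: if `β := evʳ_g(α) ≠ 0`, then
`evʳ_{fg}(α) = evʳ_f(β α β⁻¹) · β`. -/
theorem evalR_mul (f g : Polynomial (Quaternion ℝ)) (α β : Quaternion ℝ)
    (hβ : β = evalR α g) (hne : β ≠ 0) :
    evalR α (f * g) = evalR (β * α * β⁻¹) f * β := by
  rw [evalR_eq_eval, evalR_eq_eval] at *
  subst hβ
  exact eval_mul_key f g α hne
end

section
/- Every polynomial f ∈ ℍ[t] over the quaternions of degree at least 1 has a right root, i.e. there exists α ∈ ℍ with evʳ_f(α) = 0. -/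
open Polynomial

namespace QuatFTA

local notation "ℍ" => Quaternion ℝ

noncomputable def ev (β : ℍ) (f : Polynomial ℍ) : ℍ :=
  eval₂ (RingHom.id ℍ) β f

lemma evalR_eq_ev (β : ℍ) (f : Polynomial ℍ) : evalR β f = ev β f := by
  rw [ev, eval₂_eq_sum_range, evalR]
  simp

/-- Coefficientwise star of a quaternionic polynomial. -/
noncomputable def pstar (f : Polynomial ℍ) : Polynomial ℍ :=
  ∑ k ∈ Finset.range (f.natDegree + 1), monomial k (star (f.coeff k))

lemma coeff_pstar (f : Polynomial ℍ) (k : ℕ) :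
    (pstar f).coeff k = star (f.coeff k) := by
  rw [pstar, finset_sum_coeff]
  simp only [coeff_monomial]
  rw [Finset.sum_ite_eq' (Finset.range (f.natDegree + 1)) k]
  split_ifs with h
  · rfl
  · rw [Finset.mem_range, not_lt] at h
    rw [coeff_eq_zero_of_natDegree_lt (by omega), star_zero]

lemma pstar_pstar (f : Polynomial ℍ) : pstar (pstar f) = f := by
  refine Polynomial.ext fun k => ?_
  rw [coeff_pstar, coeff_pstar, star_star]

lemma pstar_mul (f g : Polynomial ℍ) : pstar (f * g) = pstar g * pstar f := by
  refine Polynomial.ext fun k => ?_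
  rw [coeff_pstar, coeff_mul, coeff_mul, star_sum,
    ← Finset.Nat.sum_antidiagonal_swap
      (f := fun p => star (f.coeff p.1 * g.coeff p.2))]
  refine Finset.sum_congr rfl fun p _ => ?_
  simp only [Prod.fst_swap, Prod.snd_swap, star_mul, coeff_pstar]

lemma natDegree_pstar (f : Polynomial ℍ) : (pstar f).natDegree = f.natDegree := by
  rcases eq_or_ne f 0 with rfl | hf
  · simp [pstar]
  · refine le_antisymm (natDegree_le_iff_coeff_eq_zero.mpr fun m hm => ?_)
      (le_natDegree_of_ne_zero ?_)
    · rw [coeff_pstar, coeff_eq_zero_of_natDegree_lt hm, star_zero]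
    · rw [coeff_pstar]
      simpa [star_eq_zero] using mt leadingCoeff_eq_zero.mp hf

lemma pstar_X_sub_C (w : ℍ) : pstar (X - C w) = X - C (star w) := by
  refine Polynomial.ext fun k => ?_
  simp only [coeff_pstar, coeff_sub, coeff_X, coeff_C]
  split_ifs <;> simp

lemma ev_C_mul (c β : ℍ) (p : Polynomial ℍ) : ev β (C c * p) = c * ev β p := by
  induction p using Polynomial.induction_on' with
  | add p q hp hq => simp only [mul_add, ev, eval₂_add] at *; rw [hp, hq]
  | monomial n d =>
      rw [C_mul_monomial, ev, ev, eval₂_monomial, eval₂_monomial]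
      simp [mul_assoc]

lemma conj_pow (a β : ℍ) (ha : a ≠ 0) (n : ℕ) :
    (a * β * a⁻¹) ^ n = a * β ^ n * a⁻¹ := by
  induction n with
  | zero => simp [mul_inv_cancel₀ ha]
  | succ n ih =>
      rw [pow_succ, ih, pow_succ]
      have h : a⁻¹ * (a * β * a⁻¹) = β * a⁻¹ := by
        rw [← mul_assoc, ← mul_assoc, inv_mul_cancel₀ ha, one_mul]
      rw [mul_assoc (a * β ^ n), h]
      simp [mul_assoc]

lemma commute_X_pow_coeff (n k : ℕ) (β : ℍ) :
    Commute (RingHom.id ℍ ((X ^ n : Polynomial ℍ).coeff k)) β := by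
  simp only [RingHom.id_apply, coeff_X_pow]
  split_ifs
  · exact Commute.one_left β
  · exact Commute.zero_left β

lemma ev_mul_right (f g : Polynomial ℍ) (β a : ℍ) (ha : a ≠ 0)
    (hg : ev β g = a) :
    ev β (f * g) = ev (a * β * a⁻¹) f * a := by
  induction f using Polynomial.induction_on' with
  | add p q hp hq =>
      simp only [ev] at *
      rw [add_mul, eval₂_add, hp, hq, eval₂_add, add_mul]
  | monomial n c =>
      have h1 : (monomial n c) * g = (C c * g) * X ^ n := by
        rw [← C_mul_X_pow_eq_monomial, mul_assoc, X_pow_mul, ← mul_assoc]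
      rw [h1, ev, eval₂_mul_noncomm _ _ (fun k => commute_X_pow_coeff n k β),
        eval₂_X_pow, ← ev, ev_C_mul, hg, ev, eval₂_monomial, RingHom.id_apply,
        conj_pow _ _ ha n]
      simp [mul_assoc, inv_mul_cancel₀ ha]

lemma exists_right_factor (g : Polynomial ℍ) (w : ℍ) :
    ∃ q : Polynomial ℍ, g = q * (X - C w) + C (ev w g) := by
  induction g using Polynomial.induction_on' with
  | add p r hp hr =>
      obtain ⟨qp, hqp⟩ := hp
      obtain ⟨qr, hqr⟩ := hr
      refine ⟨qp + qr, ?_⟩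
      rw [ev, eval₂_add, ← ev, ← ev, C_add, add_mul]
      conv_lhs => rw [hqp, hqr]
      abel
  | monomial n c =>
      refine ⟨∑ i ∈ Finset.range n, C (c * w ^ (n - 1 - i)) * X ^ i, ?_⟩
      have tele : (∑ i ∈ Finset.range n, C (c * w ^ (n - 1 - i)) * X ^ i) * (X - C w)
          = C c * X ^ n - C (c * w ^ n) := by
        have h := Finset.sum_range_sub (fun i => C (c * w ^ (n - i)) * X ^ i) n
        rw [Finset.sum_mul]
        calc ∑ i ∈ Finset.range n, C (c * w ^ (n - 1 - i)) * X ^ i * (X - C w)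
            = ∑ i ∈ Finset.range n,
              ((fun i => C (c * w ^ (n - i)) * X ^ i) (i + 1)
                - (fun i => C (c * w ^ (n - i)) * X ^ i) i) := by
              refine Finset.sum_congr rfl fun i hi => ?_
              have hi' : i < n := Finset.mem_range.mp hi
              have e1 : n - 1 - i = n - (i + 1) := by omega
              simp only []
              rw [e1, mul_sub]
              congr 1
              · rw [mul_assoc, ← pow_succ]
              · rw [mul_assoc, X_pow_mul, ← mul_assoc, ← C_mul, mul_assoc,
                  ← pow_succ, show n - (i + 1) + 1 = n - i by omega]
          _ = C (c * w ^ (n - n)) * X ^ n - C (c * w ^ (n - 0)) * X ^ 0 := h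
          _ = C c * X ^ n - C (c * w ^ n) := by simp
      rw [ev, eval₂_monomial, RingHom.id_apply, tele, sub_add_cancel,
        C_mul_X_pow_eq_monomial]

lemma ev_mul_X_sub_C (p : Polynomial ℍ) (δ : ℍ) : ev δ (p * (X - C δ)) = 0 := by
  rw [ev, eval₂_mul_noncomm]
  · rw [eval₂_sub, eval₂_X, eval₂_C, RingHom.id_apply, sub_self, mul_zero]
  · intro k
    simp only [RingHom.id_apply, coeff_sub, coeff_X, coeff_C]
    rcases k with _ | _ | k
    · simpa using (Commute.refl δ).neg_left
    · simpa using Commute.one_left δ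
    · simpa using Commute.zero_left δ

lemma quat_real_of_star_fixed {q : ℍ} (h : star q = q) : q = ((q.re : ℝ) : ℍ) := by
  ext <;>
    simp_all [Quaternion.ext_iff, neg_eq_iff_add_eq_zero, Quaternion.re_coe,
      Quaternion.imI_coe, Quaternion.imJ_coe, Quaternion.imK_coe] <;>
    nlinarith [congrArg QuaternionAlgebra.imI h, congrArg QuaternionAlgebra.imJ h,
      congrArg Quaternion.imK h]

theorem main : ∀ n : ℕ, ∀ f : Polynomial ℍ, f.natDegree ≤ n → 1 ≤ f.natDegree →
    ∃ α : ℍ, ev α f = 0 := by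
  intro n
  induction n with
  | zero => intro f h h1; omega
  | succ n ih =>
      intro f hle h1
      have hf0 : f ≠ 0 := fun h => by simp [h] at h1
      set h := f * pstar f with hh
      -- h has real coefficients
      have hself : pstar h = h := by
        rw [hh, pstar_mul, pstar_pstar]
      have hre : ∀ k, h.coeff k = (((h.coeff k).re : ℝ) : ℍ) := by
        intro k
        refine quat_real_of_star_fixed ?_
        conv_rhs => rw [← hself]
        rw [coeff_pstar]
      -- leading coefficient of h
      have hl : f.leadingCoeff ≠ 0 := leadingCoeff_ne_zero.mpr hf0
      have h2 : h.coeff (f.natDegree + f.natDegree)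
          = f.leadingCoeff * star f.leadingCoeff := by
        have h3 := coeff_mul_degree_add_degree f (pstar f)
        rw [natDegree_pstar, ← hh] at h3
        have e : (pstar f).leadingCoeff = star f.leadingCoeff := by
          rw [leadingCoeff, leadingCoeff, natDegree_pstar, coeff_pstar]
        rw [e] at h3
        exact h3
      have hlcre : (h.coeff (f.natDegree + f.natDegree)).re
          = Quaternion.normSq f.leadingCoeff := by
        rw [h2, ← Quaternion.normSq_def]
      have hlc : h.coeff (f.natDegree + f.natDegree) ≠ 0 := by
        rw [h2]
        exact mul_ne_zero hl (star_ne_zero.mpr hl)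
      have hdeg : f.natDegree + f.natDegree ≤ h.natDegree := le_natDegree_of_ne_zero hlc
      -- complex polynomial with the (real) coefficients of h
      set N := h.natDegree + 1 with hN
      set P : Polynomial ℂ :=
        ∑ k ∈ Finset.range N, monomial k (((h.coeff k).re : ℂ)) with hP
      have coeffP : ∀ m, P.coeff m =
          if m ∈ Finset.range N then (((h.coeff m).re : ℝ) : ℂ) else 0 := by
        intro m
        rw [hP, finset_sum_coeff]
        simp only [coeff_monomial]
        rw [Finset.sum_ite_eq' (Finset.range N) m]
      have hPdeg : 0 < P.degree := by
        have hmem : f.natDegree + f.natDegree ∈ Finset.range N := by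
          rw [Finset.mem_range]; omega
        have : P.coeff (f.natDegree + f.natDegree) ≠ 0 := by
          rw [coeffP, if_pos hmem, hlcre]
          exact_mod_cast Quaternion.normSq_ne_zero.mpr hl
        have h2 : f.natDegree + f.natDegree ≤ P.natDegree := le_natDegree_of_ne_zero this
        have : 0 < P.natDegree := by omega
        exact natDegree_pos_iff_degree_pos.mp this
      obtain ⟨z, hz⟩ := Complex.exists_root hPdeg
      have hzeval : ∑ k ∈ Finset.range N, (((h.coeff k).re : ℝ) : ℂ) * z ^ k = 0 := by
        have := hz
        rw [IsRoot, hP, eval_finset_sum] at this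
        simpa [eval_monomial] using this
      set w : ℍ := Quaternion.coeComplex z with hw
      -- h vanishes at w
      have hevh : ev w h = 0 := by
        rw [ev, eval₂_eq_sum_range]
        have : ∀ k ∈ Finset.range (h.natDegree + 1),
            (RingHom.id ℍ) (h.coeff k) * w ^ k
              = Quaternion.ofComplex ((((h.coeff k).re : ℝ) : ℂ) * z ^ k) := by
          intro k _
          rw [map_mul, map_pow, RingHom.id_apply, hre k]
          rfl
        rw [Finset.sum_congr rfl this, ← map_sum, ← hN, hzeval, map_zero]
      -- case split on whether pstar f vanishes at w
      by_cases ha : ev w (pstar f) = 0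
      · -- f = (X - C (star w)) * g₂
        obtain ⟨q, hq⟩ := exists_right_factor (pstar f) w
        rw [ha, map_zero, add_zero] at hq
        have hfact : f = (X - C (star w)) * pstar q := by
          conv_lhs => rw [← pstar_pstar f, hq]
          rw [pstar_mul, pstar_X_sub_C]
        set g₂ := pstar q with hg₂
        have hg₂0 : g₂ ≠ 0 := by
          intro h0
          rw [h0, mul_zero] at hfact
          exact hf0 hfact
        have hdeg2 : f.natDegree = 1 + g₂.natDegree := by
          rw [hfact, natDegree_mul' ?_, natDegree_X_sub_C]
          rw [leadingCoeff_X_sub_C, one_mul]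
          exact leadingCoeff_ne_zero.mpr hg₂0
        by_cases hg1 : 1 ≤ g₂.natDegree
        · obtain ⟨δ, hδ⟩ := ih g₂ (by omega) hg1
          obtain ⟨q₂, hq₂⟩ := exists_right_factor g₂ δ
          rw [hδ, map_zero, add_zero] at hq₂
          refine ⟨δ, ?_⟩
          rw [hfact, hq₂, ← mul_assoc]
          exact ev_mul_X_sub_C _ δ
        · have hg0 : g₂.natDegree = 0 := by omega
          have hgC : g₂ = C (g₂.coeff 0) := eq_C_of_natDegree_eq_zero hg0
          set d := g₂.coeff 0 with hd
          have hd0 : d ≠ 0 := by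
            intro h0
            apply hg₂0
            rw [hgC, h0, map_zero]
          refine ⟨d⁻¹ * (star w * d), ?_⟩
          have hexp : f = C d * X - C (star w * d) := by
            rw [hfact, hgC, sub_mul, X_mul_C, ← C_mul]
          rw [hexp, ev, eval₂_sub, eval₂_C, ← ev, ev_C_mul, ev, eval₂_X,
            RingHom.id_apply, mul_inv_cancel_left₀ hd0, sub_self]
      · -- product formula
        have := ev_mul_right f (pstar f) w (ev w (pstar f)) ha rfl
        rw [← hh, hevh] at this
        refine ⟨ev w (pstar f) * w * (ev w (pstar f))⁻¹, ?_⟩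
        rcases mul_eq_zero.mp this.symm with h0 | h0
        · exact h0
        · exact absurd h0 ha

end QuatFTA

/-- Fundamental theorem of algebra for quaternions: every quaternionic polynomial
of degree at least `1` has a right root. -/
theorem exists_right_root (f : Polynomial (Quaternion ℝ)) (hf : 1 ≤ f.natDegree) :
    ∃ α : Quaternion ℝ, evalR α f = 0 := by
  obtain ⟨α, hα⟩ := QuatFTA.main f.natDegree f le_rfl hf
  exact ⟨α, by rw [QuatFTA.evalR_eq_ev]; exact hα⟩
end

section
/- Let f ∈ ℍ[t] be a nonzero polynomial over the quaternions of degree n. Then the set {(Re(α), ‖α‖) : α ∈ ℍ is a right root of f} ⊆ ℝ × ℝ is finite and has at most n elements. (Since two quaternions are similar exactly when they have equal real parts and equal norms, this says that the number of similarity classes containing right roots of f is at most n.) -/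
/-!
If `α` is a right root of `f`, the factor theorem (`X` commutes with the constant `α`) gives
`f = g (X - α)`, so `f f̄ = g (X - α)(X - ᾱ) ḡ = χ g ḡ` where `χ = X² - 2 Re(α) X + ‖α‖²` is real,
hence central. Thus `χ` divides the real polynomial `f f̄` of degree `2n`. The complex roots of `χ`
have real part `Re α` and modulus `‖α‖`, so the `χ` of distinct similarity classes are pairwise
coprime, and their product still divides `f f̄`: there are at most `n` classes.
-/

open Polynomial

namespace Polynomial

section StarRing

variable {R : Type*} [Semiring R] [StarRing R]

/-- Coefficientwise `star`, written through `opRingEquiv` so that it is visibly a ring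
antihomomorphism. -/
noncomputable def conj (f : R[X]) : R[X] :=
  ((opRingEquiv R).symm (f.map (starRingEquiv : R ≃+* Rᵐᵒᵖ))).unop

@[simp]
theorem coeff_conj (f : R[X]) (n : ℕ) : (conj f).coeff n = star (f.coeff n) := by
  simpa [conj] using congrArg MulOpposite.unop
    (coeff_opRingEquiv ((opRingEquiv R).symm (f.map (starRingEquiv : R ≃+* Rᵐᵒᵖ))) n).symm

theorem conj_mul (f g : R[X]) : conj (f * g) = conj g * conj f := by
  simp [conj, Polynomial.map_mul]

theorem conj_conj (f : R[X]) : conj (conj f) = f := by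
  ext n; simp

theorem conj_ne_zero {f : R[X]} (hf : f ≠ 0) : conj f ≠ 0 := by
  contrapose! hf
  ext n
  simpa using congrArg (coeff · n) hf

@[simp]
theorem natDegree_conj (f : R[X]) : (conj f).natDegree = f.natDegree := by
  rw [conj, ← natDegree_opRingEquiv, RingEquiv.apply_symm_apply,
    natDegree_map_eq_of_injective (EquivLike.injective _)]

end StarRing

section Ring

variable {R : Type*} [Ring R]

theorem exists_eq_mul_X_sub_C_of_eval_eq_zero {f : R[X]} {a : R} (h : f.eval a = 0) :
    ∃ g : R[X], f = g * (X - C a) := by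
  have hX : Commute X (C a) := commute_X _
  refine ⟨∑ k ∈ Finset.range (f.natDegree + 1),
    C (f.coeff k) * ∑ i ∈ Finset.range k, X ^ i * C a ^ (k - 1 - i), ?_⟩
  calc f = f - C (f.eval a) := by rw [h, C_0, sub_zero]
    _ = ∑ k ∈ Finset.range (f.natDegree + 1), C (f.coeff k) * (X ^ k - C a ^ k) := by
      simp only [mul_sub, Finset.sum_sub_distrib, ← as_sum_range_C_mul_X_pow, eval_eq_sum_range,
        map_sum, C_mul, C_pow]
    _ = _ := by simp_rw [← hX.geom_sum₂_mul, ← mul_assoc, Finset.sum_mul]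

theorem conj_X_sub_C [StarRing R] (a : R) : conj (X - C a) = X - C (star a) := by
  ext n
  rcases n with _ | _ | n <;> simp [coeff_X, coeff_C]

end Ring

theorem commute_map_algebraMap {R A : Type*} [CommSemiring R] [Semiring A] [Algebra R A]
    (P : R[X]) (g : A[X]) : Commute (P.map (algebraMap R A)) g := by
  induction P using Polynomial.induction_on' with
  | add p q hp hq => rw [Polynomial.map_add]; exact hp.add_left hq
  | monomial n c =>
    rw [map_monomial, ← C_mul_X_pow_eq_monomial, ← algebraMap_apply]
    exact (Algebra.commute_algebraMap_left c g).mul_left (commute_X_pow g n)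

theorem card_mul_le_natDegree_of_pairwise_isCoprime {R ι : Type*} [CommRing R] [IsDomain R]
    {N : R[X]} (hN : N ≠ 0) {Q : ι → R[X]} {d : ℕ} (s : Finset ι) (hdvd : ∀ i ∈ s, Q i ∣ N)
    (hdeg : ∀ i ∈ s, (Q i).natDegree = d)
    (hcop : (s : Set ι).Pairwise (Function.onFun IsCoprime Q)) :
    s.card * d ≤ N.natDegree := by
  have hQ0 : ∀ i ∈ s, Q i ≠ 0 := fun i hi => ne_zero_of_dvd_ne_zero hN (hdvd i hi)
  calc s.card * d = (∏ i ∈ s, Q i).natDegree := by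
        rw [natDegree_prod _ _ hQ0, Finset.sum_congr rfl hdeg, Finset.sum_const, smul_eq_mul]
    _ ≤ N.natDegree := natDegree_le_of_dvd (Finset.prod_dvd_of_coprime hcop hdvd) hN

end Polynomial

theorem Set.finite_and_ncard_le_of_forall_finset_card_le {α : Type*} {s : Set α} {n : ℕ}
    (h : ∀ t : Finset α, ↑t ⊆ s → t.card ≤ n) : s.Finite ∧ s.ncard ≤ n := by
  have hs : s.Finite := by
    by_contra hs
    obtain ⟨t, hts, ht⟩ := Set.Infinite.exists_subset_card_eq hs (n + 1)
    have := h t hts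
    omega
  exact ⟨hs, Set.ncard_eq_toFinset_card s hs ▸ h hs.toFinset (by simp)⟩

local notation "ℍ" => Quaternion ℝ

noncomputable def classPoly (p : ℝ × ℝ) : ℝ[X] := X ^ 2 - C (2 * p.1) * X + C (p.2 ^ 2)

theorem classPoly_monic (p : ℝ × ℝ) : (classPoly p).Monic := by
  unfold classPoly; monicity!

theorem natDegree_classPoly (p : ℝ × ℝ) : (classPoly p).natDegree = 2 := by
  unfold classPoly; compute_degree!

theorem map_classPoly (α : ℍ) :
    (classPoly (α.re, ‖α‖)).map (algebraMap ℝ ℍ) = (X - C α) * (X - C (star α)) := by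
  have hsum : α + star α = ((2 * α.re : ℝ) : ℍ) := Quaternion.self_add_star' α
  have hprod : α * star α = ((‖α‖ ^ 2 : ℝ) : ℍ) := by
    rw [Quaternion.self_mul_star, Quaternion.normSq_eq_norm_mul_self, sq]
  simp only [classPoly, Polynomial.map_add, Polynomial.map_sub, Polynomial.map_mul,
    Polynomial.map_pow, map_X, map_C, Quaternion.algebraMap_def, ← hsum, ← hprod]
  rw [C_add, C_mul, sub_mul, mul_sub, mul_sub, X_mul_C]
  noncomm_ring

theorem evalR_eq_eval_s10 (α : ℍ) (f : ℍ[X]) : evalR α f = f.eval α := by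
  rw [evalR, eval_eq_sum_range]

theorem mul_conj_mem_lifts (f : ℍ[X]) : f * conj f ∈ lifts (algebraMap ℝ ℍ) := by
  refine lifts_iff_coeff_lifts _ |>.2 fun n => ?_
  have hself : star ((f * conj f).coeff n) = (f * conj f).coeff n := by
    rw [← coeff_conj, Polynomial.conj_mul, conj_conj]
  exact ⟨_, (congrFun Quaternion.algebraMap_def _).trans (Quaternion.star_eq_self.1 hself).symm⟩

theorem classPoly_dvd_of_eval_eq_zero {f : ℍ[X]} {N : ℝ[X]}
    (hN : N.map (algebraMap ℝ ℍ) = f * conj f) {α : ℍ} (hα : f.eval α = 0) :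
    classPoly (α.re, ‖α‖) ∣ N := by
  obtain ⟨g, rfl⟩ := exists_eq_mul_X_sub_C_of_eval_eq_zero hα
  rw [← map_dvd_map _ Quaternion.algebraMap_injective (classPoly_monic _), hN,
    Polynomial.conj_mul, conj_X_sub_C]
  refine ⟨g * conj g, ?_⟩
  rw [mul_assoc, ← mul_assoc (X - C α), ← map_classPoly, ← mul_assoc,
    ← (commute_map_algebraMap _ g).eq, mul_assoc]

theorem eq_re_norm_of_aeval_classPoly_eq_zero (α : ℍ) {z : ℂ}
    (hz : aeval z (classPoly (α.re, ‖α‖)) = 0) : (α.re, ‖α‖) = (z.re, ‖z‖) := by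
  have hre : α.re ^ 2 ≤ ‖α‖ ^ 2 := by
    rw [sq ‖α‖, ← Quaternion.normSq_eq_norm_mul_self, Quaternion.normSq_def']
    nlinarith [sq_nonneg α.imI, sq_nonneg α.imJ, sq_nonneg α.imK]
  obtain ⟨hz_re, hz_im⟩ : z.re ^ 2 - z.im ^ 2 - 2 * α.re * z.re + ‖α‖ ^ 2 = 0 ∧
      z.im * (z.re - α.re) = 0 := by
    simp [classPoly, Complex.ext_iff, sq] at hz
    constructor <;> linarith
  have hx : z.re = α.re := by
    rcases mul_eq_zero.1 hz_im with hy | hx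
    · nlinarith [sq_nonneg (z.re - α.re)]
    · linarith
  have hnorm : ‖z‖ ^ 2 = ‖α‖ ^ 2 := by
    rw [Complex.sq_norm, Complex.normSq_apply, ← sq, ← sq, hx]
    rw [hx] at hz_re
    linarith
  exact Prod.ext hx.symm ((pow_left_inj₀ (norm_nonneg _) (norm_nonneg _) two_ne_zero).1 hnorm).symm

theorem isCoprime_classPoly {α β : ℍ} (h : (α.re, ‖α‖) ≠ (β.re, ‖β‖)) :
    IsCoprime (classPoly (α.re, ‖α‖)) (classPoly (β.re, ‖β‖)) := by
  refine (isCoprime_iff_aeval_ne_zero_of_isAlgClosed ℝ ℂ _ _).2 fun z => ?_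
  by_contra! hz
  exact h ((eq_re_norm_of_aeval_classPoly_eq_zero α hz.1).trans
    (eq_re_norm_of_aeval_classPoly_eq_zero β hz.2).symm)

/-- The number of similarity classes containing right roots of a nonzero quaternionic
polynomial `f` of degree `n` is at most `n`: the set of pairs `(Re α, ‖α‖)` over right
roots `α` of `f` is finite with at most `n` elements. -/
theorem card_root_classes_le_degree (f : Polynomial (Quaternion ℝ)) (hf : f ≠ 0) :
    ({p : ℝ × ℝ | ∃ α : Quaternion ℝ, evalR α f = 0 ∧ p = (α.re, ‖α‖)}).Finite ∧
    ({p : ℝ × ℝ | ∃ α : Quaternion ℝ, evalR α f = 0 ∧ p = (α.re, ‖α‖)}).ncard ≤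
      f.natDegree := by
  obtain ⟨N, hN⟩ := (mem_lifts (f * conj f)).1 (mul_conj_mem_lifts f)
  have hN0 : N ≠ 0 := by
    rintro rfl
    exact mul_ne_zero hf (conj_ne_zero hf) (by rw [← hN, Polynomial.map_zero])
  have hdeg : N.natDegree ≤ 2 * f.natDegree := by
    rw [← natDegree_map_eq_of_injective Quaternion.algebraMap_injective, hN, two_mul]
    exact natDegree_mul_le.trans_eq (by rw [natDegree_conj])
  refine Set.finite_and_ncard_le_of_forall_finset_card_le fun T hT => ?_
  have hroot : ∀ p ∈ T, ∃ α : ℍ, f.eval α = 0 ∧ p = (α.re, ‖α‖) := fun p hp => by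
    obtain ⟨α, hα, rfl⟩ := hT hp
    exact ⟨α, by rwa [← evalR_eq_eval_s10], rfl⟩
  have hcard := card_mul_le_natDegree_of_pairwise_isCoprime hN0 T (Q := classPoly)
    (fun p hp => by
      obtain ⟨α, hα, rfl⟩ := hroot p hp
      exact classPoly_dvd_of_eval_eq_zero hN hα)
    (fun p _ => natDegree_classPoly p)
    (fun p hp q hq hpq => by
      obtain ⟨α, -, rfl⟩ := hroot p hp
      obtain ⟨β, -, rfl⟩ := hroot q hq
      exact isCoprime_classPoly hpq)
  omega
end

section
/- Let f ∈ ℍ[t] be a nonzero special quaternionic polynomial, and let p ∈ ℝ[t] be a real polynomial such that f̄·f equals the image of p under the algebra map ℝ[t] → ℍ[t]. Then f can be written as a product f = g₁·g₂·⋯·g_m of polynomials of the form g = a + (b𝐣)·t with a, b ∈ ℂ (linear special polynomials) if and only if every complex root of p lies on the imaginary axis, i.e. for every w ∈ ℂ with p(w) = 0 one has Re(w) = 0. -/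
open Polynomial

/-- The complex number `z = x + iy` viewed as the quaternion `x + y𝐢`. -/
def toQ (z : ℂ) : Quaternion ℝ := ⟨z.re, z.im, 0, 0⟩

/-- The quaternion `z𝐣 = x𝐣 + y𝐤` for a complex number `z = x + iy`. -/
def toQj (z : ℂ) : Quaternion ℝ := ⟨0, 0, z.re, z.im⟩

/-- A quaternionic polynomial is *special* if all its even-degree coefficients lie in
`span_ℝ{1, 𝐢}` and all its odd-degree coefficients lie in `span_ℝ{𝐣, 𝐤}`. -/
def IsSpecial (f : Polynomial (Quaternion ℝ)) : Prop :=
  ∀ k : ℕ, (Even k → (f.coeff k).imJ = 0 ∧ (f.coeff k).imK = 0) ∧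
    (Odd k → (f.coeff k).re = 0 ∧ (f.coeff k).imI = 0)

/-- The conjugate polynomial `f̄`, obtained by applying quaternionic conjugation
to each coefficient of `f`. -/
noncomputable def pconj (f : Polynomial (Quaternion ℝ)) : Polynomial (Quaternion ℝ) :=
  ∑ k ∈ Finset.range (f.natDegree + 1), Polynomial.C (star (f.coeff k)) * Polynomial.X ^ k

/-! Write a special polynomial as `f = A(t²) + B(t²)𝐣t` with `A, B ∈ ℂ[t]` (`ofPair A B`). Since
`𝐣z = z̄𝐣`, products become `(A, B)(A', B') = (AA' - tBB̄', AB' + BĀ')`, where `Ā` conjugates the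
coefficients, and the companion polynomial becomes `f̄f = q(t²)` with `q = ĀA + tB̄B`
(`pairNorm A B`), which is multiplicative. The complex roots of `p` are thus the square roots of
the roots of `q`, and they are all imaginary iff every root of `q` is a real number `≤ 0`.

A linear factor `a + b𝐣t` has `q = |a|² + |b|²t`, whose only root is `≤ 0`. Conversely, at a root
`u ≤ 0` of `q` there is `a ∈ ℂ` with `|a|² = -u` and `A(u) = aB(u)` (`a = A(u)/B(u)`, or a real
`a = √-u` when `B(u) = 0`), and then `f = f'·(a + 𝐣t)` with `q = q'·(t - u)`; induction on `deg q`
splits `f` into linear factors. -/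

open ComplexConjugate
open scoped ComplexOrder

local notation "ℍ" => Quaternion ℝ

lemma Submonoid.mem_closure_iff_exists_list_prod {M : Type*} [Monoid M] {s : Set M} {x : M} :
    x ∈ Submonoid.closure s ↔ ∃ L : List M, (∀ y ∈ L, y ∈ s) ∧ x = L.prod := by
  refine ⟨fun hx => ?_, fun ⟨L, hL, hx⟩ => ?_⟩
  · obtain ⟨L, hL, rfl⟩ := Submonoid.exists_list_of_mem_closure hx
    exact ⟨L, hL, rfl⟩
  · exact hx ▸ Submonoid.list_prod_mem _ fun y hy => Submonoid.subset_closure (hL y hy)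

lemma coeff_sum_range_C_mul_X_pow {R : Type*} [Semiring R] (c : ℕ → R) (N n : ℕ) :
    (∑ k ∈ Finset.range N, C (c k) * X ^ k).coeff n = if n < N then c n else 0 := by
  simp [coeff_C_mul, coeff_X_pow]

lemma exists_coeff_eq {R : Type*} [Semiring R] (c : ℕ → R) (N : ℕ)
    (hc : ∀ n, N ≤ n → c n = 0) : ∃ P : R[X], ∀ n, P.coeff n = c n :=
  ⟨∑ k ∈ Finset.range N, C (c k) * X ^ k, fun n => by
    rw [coeff_sum_range_C_mul_X_pow]
    split_ifs with h
    · rfl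
    · exact (hc n (by omega)).symm⟩

lemma ext_coeff_two_mul {R : Type*} [Semiring R] {f g : R[X]}
    (heven : ∀ m, f.coeff (2 * m) = g.coeff (2 * m))
    (hodd : ∀ m, f.coeff (2 * m + 1) = g.coeff (2 * m + 1)) : f = g := by
  ext n
  obtain ⟨m, rfl | rfl⟩ := Nat.even_or_odd' n
  exacts [heven m, hodd m]

@[simp] lemma re_toQj (z : ℂ) : (toQj z).re = 0 := rfl
@[simp] lemma imI_toQj (z : ℂ) : (toQj z).imI = 0 := rfl
@[simp] lemma imJ_toQj (z : ℂ) : (toQj z).imJ = z.re := rfl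
@[simp] lemma imK_toQj (z : ℂ) : (toQj z).imK = z.im := rfl

lemma toQj_zero : toQj 0 = 0 := rfl

def quatJ : ℍ := toQj 1

lemma quatJ_mul_coe (z : ℂ) : quatJ * (z : ℍ) = ((conj z : ℂ) : ℍ) * quatJ := by
  ext <;> simp [quatJ]

lemma quatJ_mul_quatJ : quatJ * quatJ = -1 := by
  ext <;> simp [quatJ] <;> rfl

lemma coe_mul_quatJ (z : ℂ) : (z : ℍ) * quatJ = toQj z := by
  ext <;> simp [quatJ]

lemma star_coeComplex (z : ℂ) : star (z : ℍ) = ((conj z : ℂ) : ℍ) := by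
  apply Quaternion.ext <;> simp

lemma star_toQj (z : ℂ) : star (toQj z) = -toQj z := by
  apply Quaternion.ext <;> simp

lemma coeff_pconj (f : ℍ[X]) (n : ℕ) : (pconj f).coeff n = star (f.coeff n) := by
  rw [pconj, coeff_sum_range_C_mul_X_pow]
  split_ifs with h
  · rfl
  · rw [coeff_eq_zero_of_natDegree_lt (by omega), star_zero]

lemma natDegree_pconj (f : ℍ[X]) : (pconj f).natDegree = f.natDegree := by
  apply le_antisymm <;> rw [natDegree_le_iff_coeff_eq_zero] <;> intro N hN
  · rw [coeff_pconj, coeff_eq_zero_of_natDegree_lt hN, star_zero]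
  · rw [← star_eq_zero, ← coeff_pconj, coeff_eq_zero_of_natDegree_lt hN]

lemma natDegree_pconj_mul_self (f : ℍ[X]) : (pconj f * f).natDegree = 2 * f.natDegree := by
  rcases eq_or_ne f 0 with rfl | hf
  · simp
  have hlead : (pconj f).leadingCoeff = star f.leadingCoeff := by
    rw [leadingCoeff, natDegree_pconj, coeff_pconj, leadingCoeff]
  have hlf : f.leadingCoeff ≠ 0 := leadingCoeff_ne_zero.2 hf
  rw [natDegree_mul' (by rw [hlead]; exact mul_ne_zero (star_ne_zero.2 hlf) hlf), natDegree_pconj,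
    two_mul]

noncomputable def embedSq : ℂ[X] →+* ℍ[X] :=
  (mapRingHom Quaternion.ofComplex.toRingHom).comp (expand ℂ 2).toRingHom

lemma embedSq_apply (A : ℂ[X]) :
    embedSq A = (expand ℂ 2 A).map Quaternion.ofComplex.toRingHom :=
  rfl

lemma coeff_embedSq_two_mul (A : ℂ[X]) (m : ℕ) :
    (embedSq A).coeff (2 * m) = (A.coeff m : ℍ) := by
  simp [embedSq_apply, coeff_map, coeff_expand_mul']

lemma coeff_embedSq_two_mul_add_one (A : ℂ[X]) (m : ℕ) :
    (embedSq A).coeff (2 * m + 1) = 0 := by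
  simp [embedSq_apply, coeff_map, coeff_expand two_pos]

lemma embedSq_X : embedSq X = X ^ 2 := by
  simp [embedSq_apply]

lemma C_quatJ_mul_embedSq (A : ℂ[X]) :
    C quatJ * embedSq A = embedSq (A.map conj) * C quatJ := by
  ext1 n
  simp [embedSq_apply, coeff_C_mul, coeff_mul_C, ← map_expand, coeff_map, quatJ_mul_coe]

lemma natDegree_embedSq (A : ℂ[X]) : (embedSq A).natDegree = 2 * A.natDegree := by
  rw [embedSq_apply, natDegree_map_eq_of_injective, natDegree_expand, mul_comm]
  exact Quaternion.ofComplex.toRingHom.injective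

noncomputable def jX : ℍ[X] := C quatJ * X

lemma jX_mul_embedSq (A : ℂ[X]) : jX * embedSq A = embedSq (A.map conj) * jX := by
  rw [jX, mul_assoc, (commute_X _).eq, ← mul_assoc, C_quatJ_mul_embedSq, mul_assoc]

lemma jX_mul_jX : jX * jX = embedSq (-X) := by
  rw [jX, mul_assoc, ← mul_assoc X, X_mul_C, mul_assoc, ← mul_assoc (C quatJ), ← C_mul,
    quatJ_mul_quatJ, ← sq, map_neg embedSq, embedSq_X, C_neg, C_1, neg_one_mul]

noncomputable def ofPair (A B : ℂ[X]) : ℍ[X] :=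
  embedSq A + embedSq B * jX

noncomputable def pairNorm (A B : ℂ[X]) : ℂ[X] :=
  A.map conj * A + X * (B.map conj * B)

lemma ofPair_mul (A B A' B' : ℂ[X]) :
    ofPair A B * ofPair A' B' =
      ofPair (A * A' - X * (B * B'.map conj)) (A * B' + B * A'.map conj) := by
  have hBA' : embedSq B * jX * embedSq A' = embedSq (B * A'.map conj) * jX := by
    rw [mul_assoc, jX_mul_embedSq, ← mul_assoc, ← map_mul]
  have hBB' : embedSq B * jX * (embedSq B' * jX) = embedSq (-(X * (B * B'.map conj))) := by
    rw [← mul_assoc, mul_assoc (embedSq B), jX_mul_embedSq, mul_assoc, mul_assoc, jX_mul_jX,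
      ← map_mul, ← map_mul]
    congr 1
    ring
  simp only [ofPair, add_mul, mul_add, hBA', hBB']
  simp only [map_add, map_sub, map_neg, map_mul, add_mul, mul_assoc]
  abel

lemma pairNorm_mul (A B A' B' : ℂ[X]) :
    pairNorm (A * A' - X * (B * B'.map conj)) (A * B' + B * A'.map conj) =
      pairNorm A B * pairNorm A' B' := by
  simp only [pairNorm, Polynomial.map_sub, Polynomial.map_add, Polynomial.map_mul, map_X,
    map_map, RingHomCompTriple.comp_eq, Polynomial.map_id]
  ring

lemma ofPair_C_C (a b : ℂ) : ofPair (C a) (C b) = C (toQ a) + C (toQj b) * X := by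
  simp only [ofPair, jX, embedSq_apply, expand_C, map_C, ← mul_assoc, ← C_mul,
    AlgHom.toRingHom_eq_coe, RingHom.coe_coe, Quaternion.coe_ofComplex, coe_mul_quatJ]
  rfl

lemma coeff_ofPair_two_mul (A B : ℂ[X]) (m : ℕ) :
    (ofPair A B).coeff (2 * m) = (A.coeff m : ℍ) := by
  rw [ofPair, jX, coeff_add, coeff_embedSq_two_mul, ← mul_assoc, add_eq_left]
  rcases m with _ | m
  · exact coeff_mul_X_zero _
  · rw [show 2 * (m + 1) = 2 * m + 1 + 1 by ring, coeff_mul_X, coeff_mul_C,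
      coeff_embedSq_two_mul_add_one, zero_mul]

lemma coeff_ofPair_two_mul_add_one (A B : ℂ[X]) (m : ℕ) :
    (ofPair A B).coeff (2 * m + 1) = toQj (B.coeff m) := by
  rw [ofPair, jX, coeff_add, coeff_embedSq_two_mul_add_one, ← mul_assoc, coeff_mul_X, coeff_mul_C,
    coeff_embedSq_two_mul, coe_mul_quatJ, zero_add]

lemma pconj_ofPair (A B : ℂ[X]) : pconj (ofPair A B) = ofPair (A.map conj) (-B) := by
  apply ext_coeff_two_mul <;> intro m
  · rw [coeff_pconj, coeff_ofPair_two_mul, coeff_ofPair_two_mul, star_coeComplex, coeff_map]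
  · rw [coeff_pconj, coeff_ofPair_two_mul_add_one, coeff_ofPair_two_mul_add_one, star_toQj,
      coeff_neg]
    ext <;> simp

lemma pconj_ofPair_mul_self (A B : ℂ[X]) :
    pconj (ofPair A B) * ofPair A B = embedSq (pairNorm A B) := by
  rw [pconj_ofPair, ofPair_mul, show A.map conj * B + -B * A.map conj = 0 by ring,
    show A.map conj * A - X * (-B * B.map conj) = pairNorm A B by rw [pairNorm]; ring,
    ofPair, map_zero, zero_mul, add_zero]

lemma natDegree_pairNorm (A B : ℂ[X]) : (pairNorm A B).natDegree = (ofPair A B).natDegree := by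
  have h := congrArg natDegree (pconj_ofPair_mul_self A B)
  rw [natDegree_pconj_mul_self, natDegree_embedSq] at h
  omega

lemma exists_ofPair_of_isSpecial {f : ℍ[X]} (hf : IsSpecial f) : ∃ A B, f = ofPair A B := by
  obtain ⟨A, hA⟩ := exists_coeff_eq
    (fun m => (⟨(f.coeff (2 * m)).re, (f.coeff (2 * m)).imI⟩ : ℂ)) (f.natDegree + 1)
    fun n hn => by rw [coeff_eq_zero_of_natDegree_lt (by omega)]; rfl
  obtain ⟨B, hB⟩ := exists_coeff_eq
    (fun m => (⟨(f.coeff (2 * m + 1)).imJ, (f.coeff (2 * m + 1)).imK⟩ : ℂ)) (f.natDegree + 1)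
    fun n hn => by rw [coeff_eq_zero_of_natDegree_lt (by omega)]; rfl
  refine ⟨A, B, ext_coeff_two_mul (fun m => ?_) (fun m => ?_)⟩
  · obtain ⟨hJ, hK⟩ := (hf (2 * m)).1 (even_two_mul m)
    rw [coeff_ofPair_two_mul, hA]
    ext <;> simp [hJ, hK]
  · obtain ⟨hre, hI⟩ := (hf (2 * m + 1)).2 (odd_two_mul_add_one m)
    rw [coeff_ofPair_two_mul_add_one, hB]
    ext <;> simp [hre, hI]

lemma expand_pairNorm_eq_map {A B : ℂ[X]} {p : ℝ[X]}
    (hp : pconj (ofPair A B) * ofPair A B = p.map (algebraMap ℝ ℍ)) :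
    expand ℂ 2 (pairNorm A B) = p.map (algebraMap ℝ ℂ) := by
  rw [pconj_ofPair_mul_self, embedSq_apply, ← Quaternion.ofComplex.comp_algebraMap,
    ← Polynomial.map_map] at hp
  exact map_injective _ Quaternion.ofComplex.toRingHom.injective hp

lemma forall_aeval_eq_zero_re_eq_zero_iff {p : ℝ[X]} {q : ℂ[X]}
    (h : expand ℂ 2 q = p.map (algebraMap ℝ ℂ)) :
    (∀ w : ℂ, aeval w p = 0 → w.re = 0) ↔ ∀ u, q.IsRoot u → u ≤ 0 := by
  have heval : ∀ w : ℂ, aeval w p = q.eval (w ^ 2) := fun w => by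
    rw [aeval_def, ← eval_map, ← h, expand_eval]
  simp_rw [heval, ← Complex.sq_nonpos_iff]
  refine ⟨fun hq u hu => ?_, fun hq w hw => hq _ hw⟩
  obtain ⟨w, rfl⟩ := IsAlgClosed.exists_pow_nat_eq u two_pos
  exact hq w hu

def linearSpecial : Set ℍ[X] := {g | ∃ a b : ℂ, g = C (toQ a) + C (toQj b) * X}

lemma ofPair_C_C_mem_linearSpecial (a b : ℂ) : ofPair (C a) (C b) ∈ linearSpecial :=
  ⟨a, b, ofPair_C_C a b⟩

lemma eval_map_conj {A : ℂ[X]} {u : ℂ} (hu : conj u = u) :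
    (A.map conj).eval u = conj (A.eval u) := by
  rw [eval_map, ← hu, eval₂_at_apply, hu]

lemma eval_pairNorm {A B : ℂ[X]} {u : ℂ} (hu : conj u = u) :
    (pairNorm A B).eval u = Complex.normSq (A.eval u) + u * Complex.normSq (B.eval u) := by
  simp [pairNorm, eval_map_conj hu, Complex.normSq_eq_conj_mul_self]

lemma nonpos_of_isRoot_pairNorm_C_C {a b u : ℂ} (hab : a ≠ 0 ∨ b ≠ 0)
    (hu : (pairNorm (C a) (C b)).IsRoot u) : u ≤ 0 := by
  have hroot : (Complex.normSq a : ℂ) + u * Complex.normSq b = 0 := by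
    simpa [pairNorm, Complex.normSq_eq_conj_mul_self] using hu
  have hb : b ≠ 0 := by
    rintro rfl
    simp_all
  have hb' : (0 : ℝ) < Complex.normSq b := Complex.normSq_pos.2 hb
  have hu' : u = ((-(Complex.normSq a / Complex.normSq b) : ℝ) : ℂ) := by
    push_cast
    field_simp
    linear_combination hroot
  rw [hu', ← Complex.ofReal_zero, Complex.real_le_real, neg_nonpos]
  exact div_nonneg (Complex.normSq_nonneg a) hb'.le

lemma exists_ofPair_of_mem_closure {f : ℍ[X]} (hf : f ∈ Submonoid.closure linearSpecial) :
    ∃ A B, f = ofPair A B ∧ (f ≠ 0 → ∀ u, (pairNorm A B).IsRoot u → u ≤ 0) := by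
  induction hf using Submonoid.closure_induction with
  | mem g hg =>
    obtain ⟨a, b, rfl⟩ := hg
    refine ⟨C a, C b, (ofPair_C_C a b).symm, fun hg u hu => nonpos_of_isRoot_pairNorm_C_C ?_ hu⟩
    by_contra! hab
    rw [← ofPair_C_C, hab.1, hab.2] at hg
    simp [ofPair] at hg
  | one => exact ⟨1, 0, by simp [ofPair], fun _ u hu => by simp [pairNorm] at hu⟩
  | mul g h _ _ ihg ihh =>
    obtain ⟨A, B, rfl, hAB⟩ := ihg
    obtain ⟨A', B', rfl, hAB'⟩ := ihh
    refine ⟨_, _, ofPair_mul A B A' B', fun hne u hu => ?_⟩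
    rw [pairNorm_mul, IsRoot, eval_mul, mul_eq_zero] at hu
    rcases hu with hu | hu
    · exact hAB (left_ne_zero_of_mul hne) u hu
    · exact hAB' (right_ne_zero_of_mul hne) u hu

lemma exists_factor_coeff_of_isRoot_pairNorm {A B : ℂ[X]} {u : ℂ} (hu : (pairNorm A B).IsRoot u)
    (hu0 : u ≤ 0) : ∃ a, conj a * a = -u ∧ A.eval u = a * B.eval u := by
  have hreal : conj u = u := Complex.conj_eq_iff_im.2 (Complex.nonpos_iff.1 hu0).2
  have hnorm := hu
  rw [IsRoot, eval_pairNorm hreal] at hnorm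
  by_cases hB : B.eval u = 0
  · have hA : A.eval u = 0 := by simpa [hB] using hnorm
    refine ⟨Real.sqrt (-u.re), ?_, by rw [hA, hB, mul_zero]⟩
    rw [Complex.conj_ofReal, ← Complex.ofReal_mul, Real.mul_self_sqrt
      (neg_nonneg.2 (Complex.nonpos_iff.1 hu0).1)]
    apply Complex.ext <;> simp [(Complex.nonpos_iff.1 hu0).2]
  · refine ⟨A.eval u / B.eval u, ?_, (div_mul_cancel₀ _ hB).symm⟩
    rw [map_div₀, div_mul_div_comm, ← Complex.normSq_eq_conj_mul_self,
      ← Complex.normSq_eq_conj_mul_self, div_eq_iff (by simpa using hB)]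
    linear_combination hnorm

lemma exists_ofPair_eq_mul_ofPair_C_one {A B : ℂ[X]} {a u : ℂ} (ha : conj a * a = -u)
    (hA : A.eval u = a * B.eval u) :
    ∃ A' B', ofPair A B = ofPair A' B' * ofPair (C a) (C 1) ∧
      pairNorm A B = pairNorm A' B' * (X - C u) := by
  obtain ⟨D, hD⟩ := dvd_iff_isRoot.2 (show (C a * B - A).IsRoot u by simp [hA])
  have hu : C (conj a) * C a = -C u := by rw [← C_mul, ha, C_neg]
  have hA' : (B - C (conj a) * D) * C a - X * (D * (C 1).map conj) = A := by
    simp only [map_one, Polynomial.map_one, mul_one]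
    linear_combination hD - D * hu
  have hB' : (B - C (conj a) * D) * C 1 + D * (C a).map conj = B := by
    simp only [Polynomial.map_C, C_1, mul_one]
    ring
  have hnorm := pairNorm_mul (B - C (conj a) * D) D (C a) (C 1)
  rw [hA', hB'] at hnorm
  have hlin : pairNorm (C a) (C 1) = X - C u := by
    simp only [pairNorm, Polynomial.map_C, C_1, Polynomial.map_one, mul_one]
    linear_combination hu
  exact ⟨B - C (conj a) * D, D, by rw [ofPair_mul, hA', hB'], by rw [hnorm, hlin]⟩

lemma ofPair_mem_closure_of_isRoot_nonpos {A B : ℂ[X]}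
    (hroots : ∀ u, (pairNorm A B).IsRoot u → u ≤ 0) :
    ofPair A B ∈ Submonoid.closure linearSpecial := by
  induction hn : (pairNorm A B).natDegree generalizing A B with
  | zero =>
    rw [natDegree_pairNorm] at hn
    rw [eq_C_of_natDegree_eq_zero hn, show (ofPair A B).coeff 0 = toQ (A.coeff 0) from
      coeff_ofPair_two_mul A B 0]
    exact Submonoid.subset_closure ⟨A.coeff 0, 0, by rw [toQj_zero, C_0, zero_mul, add_zero]⟩
  | succ n ih =>
    have hne : pairNorm A B ≠ 0 := ne_zero_of_natDegree_gt (n := 0) (by omega)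
    obtain ⟨u, hu⟩ := Complex.exists_root (natDegree_pos_iff_degree_pos.1 (by omega) :
      0 < (pairNorm A B).degree)
    obtain ⟨a, ha, hA⟩ := exists_factor_coeff_of_isRoot_pairNorm hu (hroots u hu)
    obtain ⟨A', B', hprod, hnorm⟩ := exists_ofPair_eq_mul_ofPair_C_one ha hA
    have hne' : pairNorm A' B' ≠ 0 := left_ne_zero_of_mul (hnorm ▸ hne)
    rw [hprod]
    refine Submonoid.mul_mem _ (ih (fun v hv => hroots v ?_) ?_)
      (Submonoid.subset_closure (ofPair_C_C_mem_linearSpecial a 1))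
    · rw [hnorm, IsRoot, eval_mul, hv.eq_zero, zero_mul]
    · rw [hnorm, natDegree_mul hne' (X_sub_C_ne_zero u), natDegree_X_sub_C] at hn
      omega

/-- A nonzero special quaternionic polynomial `f` factors into a product of linear
special polynomials `a + (b𝐣)t` (`a, b ∈ ℂ`) if and only if all complex roots of the
(real) companion polynomial `f̄ f` lie on the imaginary axis. -/
theorem special_factors_iff_companion_roots_imaginary
    (f : Polynomial (Quaternion ℝ)) (hf : f ≠ 0) (hsp : IsSpecial f)
    (p : Polynomial ℝ) (hp : pconj f * f = p.map (algebraMap ℝ (Quaternion ℝ))) :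
    (∃ L : List (Polynomial (Quaternion ℝ)),
        (∀ g ∈ L, ∃ a b : ℂ, g = C (toQ a) + C (toQj b) * X) ∧ f = L.prod) ↔
    (∀ w : ℂ, Polynomial.aeval w p = 0 → w.re = 0) := by
  have hroots : ∀ A B, f = ofPair A B →
      ((∀ w : ℂ, aeval w p = 0 → w.re = 0) ↔ ∀ u, (pairNorm A B).IsRoot u → u ≤ 0) := by
    rintro A B rfl
    exact forall_aeval_eq_zero_re_eq_zero_iff (expand_pairNorm_eq_map hp)
  refine Submonoid.mem_closure_iff_exists_list_prod.symm.trans ⟨fun hmem => ?_, fun h => ?_⟩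
  · obtain ⟨A, B, hAB, hnonpos⟩ := exists_ofPair_of_mem_closure hmem
    exact (hroots A B hAB).2 (hnonpos hf)
  · obtain ⟨A, B, rfl⟩ := exists_ofPair_of_isSpecial hsp
    exact ofPair_mem_closure_of_isRoot_nonpos ((hroots A B rfl).1 h)
end

section
/- Let z, w, z', w' ∈ ℂ. Then the identity (1 + (z𝐣)t)·(1 + (w𝐣)t) = (1 + (z'𝐣)t)·(1 + (w'𝐣)t) holds in ℍ[t] if and only if z' + w' = z + w and z'·conj(w') = z·conj(w). -/
/-!
Since `(1 + a t)(1 + b t) = 1 + (a + b) t + a b t²` over any ring, two such products are equal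
exactly when the sums and the products of their coefficients agree. For `a = z𝐣`, `b = w𝐣`
the sum is `(z + w)𝐣` and, as `𝐣 w = conj(w) 𝐣` and `𝐣² = -1`, the product is `-z conj(w) ∈ ℂ ⊂ ℍ`.
-/

open Polynomial

namespace Polynomial

variable {R : Type*} [Ring R]

theorem one_add_C_mul_X_mul_one_add_C_mul_X (a b : R) :
    (1 + C a * X) * (1 + C b * X) = 1 + C (a + b) * X + C (a * b) * X ^ 2 := by
  have hX : C a * X * (C b * X) = C (a * b) * X ^ 2 := by
    rw [mul_assoc, ← mul_assoc X, X_mul_C, mul_assoc, ← mul_assoc, ← C_mul, sq]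
  rw [mul_add, add_mul, add_mul, mul_one, one_mul, mul_one, hX, C_add, add_mul]
  abel

theorem one_add_C_mul_X_add_C_mul_X_sq_inj (s p s' p' : R) :
    1 + C s * X + C p * X ^ 2 = 1 + C s' * X + C p' * X ^ 2 ↔ s = s' ∧ p = p' := by
  refine ⟨fun h => ⟨?_, ?_⟩, fun ⟨hs, hp⟩ => hs ▸ hp ▸ rfl⟩
  · simpa using congrArg (coeff · 1) h
  · simpa using congrArg (coeff · 2) h

theorem one_add_C_mul_X_mul_one_add_C_mul_X_inj (a b a' b' : R) :
    (1 + C a * X) * (1 + C b * X) = (1 + C a' * X) * (1 + C b' * X) ↔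
      a + b = a' + b' ∧ a * b = a' * b' := by
  rw [one_add_C_mul_X_mul_one_add_C_mul_X, one_add_C_mul_X_mul_one_add_C_mul_X,
    one_add_C_mul_X_add_C_mul_X_sq_inj]

end Polynomial

theorem toQj_injective : Function.Injective toQj := fun z w h => by
  injection h with _ _ hre him
  exact Complex.ext hre him

theorem toQj_add (z w : ℂ) : toQj (z + w) = toQj z + toQj w := by
  ext <;>
    simp only [Quaternion.re_add, Quaternion.imI_add, Quaternion.imJ_add, Quaternion.imK_add] <;>
    simp [toQj]

theorem toQj_mul_toQj (z w : ℂ) :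
    toQj z * toQj w = -((z * starRingEnd ℂ w : ℂ) : Quaternion ℝ) := by
  ext <;>
    simp only [Quaternion.re_mul, Quaternion.imI_mul, Quaternion.imJ_mul, Quaternion.imK_mul] <;>
    simp [toQj] <;> ring

theorem Quaternion.coeComplex_injective : Function.Injective ((↑) : ℂ → Quaternion ℝ) :=
  Quaternion.ofComplex.toRingHom.injective

/-- Refactorization of a quadratic special quaternionic polynomial encodes recutting:
`(1 + (z𝐣)t)(1 + (w𝐣)t) = (1 + (z'𝐣)t)(1 + (w'𝐣)t)` in `ℍ[t]` if and only if
`z' + w' = z + w` and `z' conj(w') = z conj(w)`. -/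
theorem refactorization_iff_recutting (z w z' w' : ℂ) :
    (1 + C (toQj z) * X) * (1 + C (toQj w) * X) =
      (1 + C (toQj z') * X) * (1 + C (toQj w') * X) ↔
    (z' + w' = z + w ∧ z' * (starRingEnd ℂ) w' = z * (starRingEnd ℂ) w) := by
  rw [one_add_C_mul_X_mul_one_add_C_mul_X_inj, ← toQj_add, ← toQj_add, toQj_mul_toQj,
    toQj_mul_toQj, neg_inj, toQj_injective.eq_iff, Quaternion.coeComplex_injective.eq_iff]
  exact and_congr eq_comm eq_comm
end

section
/- Let n ≥ 2, and let z, z' : ℤ → ℂ be n-periodic sequences (z_{k+n} = z_k and z'_{k+n} = z'_k for all k). Let j ∈ {1, …, n} and assume: z'_k = z_k for every k not congruent to j or j+1 modulo n, and z'_j + z'_{j+1} = z_j + z_{j+1}, z'_j·conj(z'_{j+1}) = z_j·conj(z_{j+1}). Let f := (1 + (z₁𝐣)t)·(1 + (z₂𝐣)t)·⋯·(1 + (zₙ𝐣)t) ∈ ℍ[t] and f' := (1 + (z'₁𝐣)t)·⋯·(1 + (z'ₙ𝐣)t) ∈ ℍ[t], products taken in increasing order of the index. Then the images of f and f' in the formal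 power series ring ℍ[[t]] are conjugate by a unit: there exists a unit u of ℍ[[t]] such that f = u·f'·u⁻¹ in ℍ[[t]]. -/
/-!
Since `(a𝐣)(b𝐣) = -a·conj b`, the quadratic polynomial `(1 + a𝐣 t)(1 + b𝐣 t)` only depends on
`a + b` and `a·conj b`, which recutting preserves. In `ℍ[[t]]` every factor `1 + z_k𝐣 t` is a unit,
and for a unit `u` the products `u·x` and `x·u` are conjugate; hence, by periodicity, the cyclic
product may start at any index without leaving its similarity class. Starting at `j`, recutting
only changes the first two factors, and it does not change their product.
-/

open Polynomial

/-- The image of a quaternionic polynomial in the ring `ℍ[[t]]` of formal power series. -/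
noncomputable def toPS (f : Polynomial (Quaternion ℝ)) : PowerSeries (Quaternion ℝ) :=
  PowerSeries.mk fun k => f.coeff k

lemma toQj_add_s14 (a b : ℂ) : toQj (a + b) = toQj a + toQj b := by
  ext <;> simp only [Quaternion.re_add, Quaternion.imI_add, Quaternion.imJ_add,
    Quaternion.imK_add] <;> simp [toQj]

lemma toQj_mul_toQj_s14 (a b : ℂ) :
    toQj a * toQj b = ⟨-(a * starRingEnd ℂ b).re, -(a * starRingEnd ℂ b).im, 0, 0⟩ := by
  ext <;> simp only [Quaternion.re_mul, Quaternion.imI_mul, Quaternion.imJ_mul,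
    Quaternion.imK_mul] <;> simp [toQj] <;> ring

lemma toPS_eq_coe (f : Polynomial (Quaternion ℝ)) : toPS f = f :=
  PowerSeries.ext fun k => by simp [toPS]

namespace PowerSeries

lemma one_add_C_mul_X_mul_one_add_C_mul_X {R : Type*} [Semiring R] (u v : R) :
    (1 + C u * X) * (1 + C v * X) = 1 + C (u + v) * X + C (u * v) * X ^ 2 := by
  have hX : C u * X * (C v * X) = C (u * v) * X ^ 2 := by
    rw [mul_assoc, ← mul_assoc X, ← (commute_X _).eq, map_mul, sq]
    noncomm_ring
  rw [mul_add, add_mul, add_mul, hX, map_add, add_mul]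
  noncomm_ring

end PowerSeries

lemma IsUnit.isConj_mul_comm {M : Type*} [Monoid M] {a : M} (ha : IsUnit a) (b : M) :
    IsConj (a * b) (b * a) := by
  obtain ⟨u, rfl⟩ := ha
  exact ⟨u⁻¹, by simp [SemiconjBy, mul_assoc]⟩

lemma Int.not_modEq_of_lt_of_sub_lt {n a b : ℤ} (hba : b < a) (hab : a - b < n) :
    ¬ a ≡ b [ZMOD n] := fun h => by
  have := Int.eq_zero_of_dvd_of_nonneg_of_lt (by omega) hab (Int.modEq_iff_dvd.mp h.symm)
  omega

section RangeProd

variable {M : Type*} [Monoid M]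

def rangeProd (w : ℤ → M) (a : ℤ) (n : ℕ) : M :=
  ((List.range n).map fun i : ℕ => w (a + i)).prod

lemma rangeProd_succ (w : ℤ → M) (a : ℤ) (n : ℕ) :
    rangeProd w a (n + 1) = w a * rangeProd w (a + 1) n := by
  simp [rangeProd, List.range_succ_eq_map, Function.comp_def, add_assoc, add_comm (1 : ℤ)]

lemma rangeProd_succ' (w : ℤ → M) (a : ℤ) (n : ℕ) :
    rangeProd w a (n + 1) = rangeProd w a n * w (a + n) := by
  simp [rangeProd, List.range_succ]

lemma rangeProd_congr {w w' : ℤ → M} {a : ℤ} {n : ℕ}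
    (h : ∀ i : ℕ, i < n → w (a + i) = w' (a + i)) :
    rangeProd w a n = rangeProd w' a n :=
  congrArg List.prod <| List.map_congr_left fun i hi => h i (List.mem_range.mp hi)

lemma isConj_rangeProd_add_one {w : ℤ → M} {n : ℕ} (hw : Function.Periodic w n)
    (hu : ∀ k, IsUnit (w k)) (a : ℤ) : IsConj (rangeProd w a n) (rangeProd w (a + 1) n) := by
  cases n with
  | zero => rfl
  | succ m =>
    rw [rangeProd_succ, rangeProd_succ', show a + 1 + m = a + (m + 1 : ℕ) by push_cast; ring, hw]
    exact (hu a).isConj_mul_comm _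

lemma isConj_rangeProd {w : ℤ → M} {n : ℕ} (hw : Function.Periodic w n)
    (hu : ∀ k, IsUnit (w k)) (a b : ℤ) : IsConj (rangeProd w a n) (rangeProd w b n) := by
  obtain ⟨k, rfl⟩ : ∃ k, b = a + k := ⟨b - a, by ring⟩
  induction k using Int.induction_on with
  | zero => rw [add_zero]
  | succ k ih => exact ih.trans (by rw [← add_assoc]; exact isConj_rangeProd_add_one hw hu _)
  | pred k ih =>
    refine ih.trans (IsConj.symm ?_)
    convert isConj_rangeProd_add_one hw hu (a + (-k - 1)) using 2
    ring

end RangeProd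

noncomputable def edgeFactor (z : ℂ) : PowerSeries (Quaternion ℝ) :=
  1 + PowerSeries.C (toQj z) * PowerSeries.X

lemma isUnit_edgeFactor (z : ℂ) : IsUnit (edgeFactor z) := by
  simp [edgeFactor, PowerSeries.isUnit_iff_constantCoeff]

lemma edgeFactor_mul_edgeFactor_eq {a b a' b' : ℂ} (hs : a' + b' = a + b)
    (hp : a' * starRingEnd ℂ b' = a * starRingEnd ℂ b) :
    edgeFactor a' * edgeFactor b' = edgeFactor a * edgeFactor b := by
  simp only [edgeFactor, PowerSeries.one_add_C_mul_X_mul_one_add_C_mul_X, ← toQj_add_s14,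
    toQj_mul_toQj_s14, hs, hp]

lemma toPS_prod_eq_rangeProd (z : ℤ → ℂ) (n : ℕ) :
    toPS (((List.range n).map fun k => 1 + C (toQj (z ((k : ℤ) + 1))) * X).prod) =
      rangeProd (edgeFactor ∘ z) 1 n := by
  -- the binder `k` is an integer: `List.range n` is lifted to a `List ℤ` through the list monad
  simp only [bind_pure_comp, List.map_eq_map]
  rw [toPS_eq_coe, ← Polynomial.coeToPowerSeries.ringHom_apply, map_list_prod, List.map_map,
    List.map_map]
  refine congrArg List.prod (List.map_congr_left fun k _ => ?_)
  simp [edgeFactor, add_comm]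

theorem recutting_similarity_invariant_general (n : ℕ) (hn : 2 ≤ n)
    (z z' : ℤ → ℂ)
    (hz : ∀ k : ℤ, z (k + n) = z k) (hz' : ∀ k : ℤ, z' (k + n) = z' k)
    (j : ℤ)
    (hfix : ∀ k : ℤ, ¬ k ≡ j [ZMOD (n : ℤ)] → ¬ k ≡ j + 1 [ZMOD (n : ℤ)] → z' k = z k)
    (hsum : z' j + z' (j + 1) = z j + z (j + 1))
    (hprod : z' j * (starRingEnd ℂ) (z' (j + 1)) = z j * (starRingEnd ℂ) (z (j + 1))) :
    ∃ u : (PowerSeries (Quaternion ℝ))ˣ,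
      toPS (((List.range n).map fun k => 1 + C (toQj (z ((k : ℤ) + 1))) * X).prod) =
        (u : PowerSeries (Quaternion ℝ)) *
          toPS (((List.range n).map fun k => 1 + C (toQj (z' ((k : ℤ) + 1))) * X).prod) *
          ((u⁻¹ : (PowerSeries (Quaternion ℝ))ˣ) : PowerSeries (Quaternion ℝ)) := by
  have hrotate : ∀ y : ℤ → ℂ, Function.Periodic y n → ∀ a b : ℤ,
      IsConj (rangeProd (edgeFactor ∘ y) a n) (rangeProd (edgeFactor ∘ y) b n) := fun y hy =>
    isConj_rangeProd (fun k => congrArg edgeFactor (hy k)) fun _ => isUnit_edgeFactor _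
  obtain ⟨m, rfl⟩ : ∃ m, n = m + 2 := ⟨n - 2, by omega⟩
  have hrecut : rangeProd (edgeFactor ∘ z') j (m + 2) = rangeProd (edgeFactor ∘ z) j (m + 2) := by
    simp only [rangeProd_succ, ← mul_assoc, Function.comp_apply,
      edgeFactor_mul_edgeFactor_eq hsum hprod]
    refine congrArg _ (rangeProd_congr fun i hi => congrArg edgeFactor (hfix _ ?_ ?_)) <;>
      exact Int.not_modEq_of_lt_of_sub_lt (by omega) (by push_cast; omega)
  obtain ⟨c, hc⟩ := (hrotate z' hz' 1 j).trans (hrecut ▸ hrotate z hz j 1)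
  refine ⟨c, ?_⟩
  rw [toPS_prod_eq_rangeProd, toPS_prod_eq_rangeProd, hc.eq, Units.mul_inv_cancel_right]

/-- Invariance of the similarity class under recutting: if the `n`-periodic sequence of
edge vectors `z'` is obtained from `z` by recutting at the `j`-th vertex, then the
associated quaternionic polynomials `f = ∏ (1 + (z_k 𝐣) t)` and `f' = ∏ (1 + (z'_k 𝐣) t)`
are conjugate by a unit in `ℍ[[t]]`. -/
theorem recutting_similarity_invariant (n : ℕ) (hn : 2 ≤ n)
    (z z' : ℤ → ℂ)
    (hz : ∀ k : ℤ, z (k + n) = z k) (hz' : ∀ k : ℤ, z' (k + n) = z' k)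
    (j : ℤ) (hj1 : 1 ≤ j) (hjn : j ≤ n)
    (hfix : ∀ k : ℤ, ¬ k ≡ j [ZMOD (n : ℤ)] → ¬ k ≡ j + 1 [ZMOD (n : ℤ)] → z' k = z k)
    (hsum : z' j + z' (j + 1) = z j + z (j + 1))
    (hprod : z' j * (starRingEnd ℂ) (z' (j + 1)) = z j * (starRingEnd ℂ) (z (j + 1))) :
    ∃ u : (PowerSeries (Quaternion ℝ))ˣ,
      toPS (((List.range n).map fun k => 1 + C (toQj (z ((k : ℤ) + 1))) * X).prod) =
        (u : PowerSeries (Quaternion ℝ)) *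
          toPS (((List.range n).map fun k => 1 + C (toQj (z' ((k : ℤ) + 1))) * X).prod) *
          ((u⁻¹ : (PowerSeries (Quaternion ℝ))ˣ) : PowerSeries (Quaternion ℝ)) :=
  recutting_similarity_invariant_general n hn z z' hz hz' j hfix hsum hprod
end

section
/- Let n ∈ ℕ and z₁, …, zₙ ∈ ℂ with z₁ + ⋯ + zₙ = 0. Set E₁ := Σ_i |z_i|², E₂ := Σ_{i<j} |z_i|²·|z_j|², A := (1/2)·Im( Σ_{i<j} z_i·conj(z_j) ), and I₂ := Σ_{i₁<i₂<i₃<i₄} Re( z_{i₁}·conj(z_{i₂})·z_{i₃}·conj(z_{i₄}) ). Then I₂ = E₂/2 − E₁²/8 − 2A². -/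
open Complex

namespace I2Aux

lemma icc_ioc (k : ℕ) : Finset.Icc 1 k = Finset.Ioc 0 k := by ext i; simp; omega

lemma sum_split (a b : ℕ) (h : a ≤ b) (f : ℕ → ℂ) :
    ∑ i ∈ Finset.Icc 1 b, f i
      = (∑ i ∈ Finset.Icc 1 a, f i) + ∑ i ∈ Finset.Ioc a b, f i := by
  rw [icc_ioc, icc_ioc, Finset.sum_Ioc_consecutive f (Nat.zero_le a) h]

lemma sum_lt {n j : ℕ} (hj : j ∈ Finset.Icc 1 n) (f : ℕ → ℂ) :
    ∑ i ∈ Finset.Icc 1 n, (if i < j then f i else 0) = ∑ i ∈ Finset.Icc 1 (j-1), f i := by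
  rw [← Finset.sum_filter]
  apply Finset.sum_congr _ (fun _ _ => rfl)
  simp only [Finset.mem_Icc] at hj
  ext i; simp only [Finset.mem_filter, Finset.mem_Icc]; omega

lemma sum_gt {n j : ℕ} (hj : j ∈ Finset.Icc 1 n) (f : ℕ → ℂ) :
    ∑ i ∈ Finset.Icc 1 n, (if j < i then f i else 0)
      = (∑ i ∈ Finset.Icc 1 n, f i) - ∑ i ∈ Finset.Icc 1 j, f i := by
  simp only [Finset.mem_Icc] at hj
  rw [← Finset.sum_filter, sum_split j n hj.2 f]
  rw [show Finset.filter (fun i => j < i) (Finset.Icc 1 n) = Finset.Ioc j n by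
    ext i; simp only [Finset.mem_filter, Finset.mem_Icc, Finset.mem_Ioc]; omega]
  ring

lemma sum_between {n j l : ℕ} (hl : l ∈ Finset.Icc 1 n) (hjl : j < l) (f : ℕ → ℂ) :
    ∑ i ∈ Finset.Icc 1 n, (if j < i ∧ i < l then f i else 0)
      = (∑ i ∈ Finset.Icc 1 (l-1), f i) - ∑ i ∈ Finset.Icc 1 j, f i := by
  simp only [Finset.mem_Icc] at hl
  rw [← Finset.sum_filter, sum_split j (l-1) (by omega) f]
  rw [show Finset.filter (fun i => j < i ∧ i < l) (Finset.Icc 1 n) = Finset.Ioc j (l-1) by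
    ext i; simp only [Finset.mem_filter, Finset.mem_Icc, Finset.mem_Ioc]; omega]
  ring

lemma tri_sum {R : Type*} [CommRing R] (s : Finset ℕ) (f g : ℕ → R) :
    (∑ i ∈ s, f i) * (∑ j ∈ s, g j)
      = (∑ i ∈ s, ∑ j ∈ s, if i < j then f i * g j else 0)
        + (∑ i ∈ s, f i * g i)
        + (∑ i ∈ s, ∑ j ∈ s, if j < i then f i * g j else 0) := by
  rw [Finset.sum_mul_sum]
  have : ∀ i ∈ s, f i * g i = ∑ j ∈ s, if j = i then f i * g j else 0 := by
    intro i hi; rw [Finset.sum_ite_eq' s i (fun j => f i * g j)]; simp [hi]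
  rw [Finset.sum_congr rfl this, ← Finset.sum_add_distrib, ← Finset.sum_add_distrib]
  apply Finset.sum_congr rfl; intro i _
  rw [← Finset.sum_add_distrib, ← Finset.sum_add_distrib]
  apply Finset.sum_congr rfl; intro j _
  rcases lt_trichotomy i j with h | h | h
  · rw [if_pos h, if_neg (by omega : ¬ j = i), if_neg (by omega : ¬ j < i)]; ring
  · rw [if_neg (by omega : ¬ i < j), if_pos h.symm, if_neg (by omega : ¬ j < i)]; ring
  · rw [if_neg (by omega : ¬ i < j), if_neg (by omega : ¬ j = i), if_pos h]; ring

lemma pointwise (u w : ℂ) :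
    (u * (starRingEnd ℂ) (w - u) * (w * (starRingEnd ℂ) w)).re
      - (u * (starRingEnd ℂ) (w - u) * (u * (starRingEnd ℂ) (w - u))).re / 2
      = (normSq w ^ 2 - normSq u ^ 2) / 4 - normSq (w - u) ^ 2 / 4 := by
  simp only [Complex.mul_re, Complex.mul_im, Complex.normSq_apply, Complex.conj_re,
    Complex.conj_im, Complex.sub_re, Complex.sub_im]
  ring

lemma telescope (F : ℕ → ℝ) (n : ℕ) :
    ∑ j ∈ Finset.Icc 1 n, (F j - F (j-1)) = F n - F 0 := by
  induction n with
  | zero => simp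
  | succ k ih => rw [Finset.sum_Icc_succ_top (by omega), ih]; simp

end I2Aux

/-- For a closed planar polygon with edge vectors `z₁, …, zₙ` (summing to zero), the
recutting invariant `I₂` is expressed through the squared side lengths and the signed
area `A`: `I₂ = E₂/2 − E₁²/8 − 2A²`. -/
theorem I2_area_formula (n : ℕ) (z : ℕ → ℂ)
    (hclosed : ∑ i ∈ Finset.Icc 1 n, z i = 0)
    (E₁ E₂ A I₂ : ℝ)
    (hE₁ : E₁ = ∑ i ∈ Finset.Icc 1 n, Complex.normSq (z i))
    (hE₂ : E₂ = ∑ i ∈ Finset.Icc 1 n, ∑ j ∈ Finset.Icc 1 n,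
      if i < j then Complex.normSq (z i) * Complex.normSq (z j) else 0)
    (hA : A = (1 / 2) * (∑ i ∈ Finset.Icc 1 n, ∑ j ∈ Finset.Icc 1 n,
      if i < j then z i * (starRingEnd ℂ) (z j) else 0).im)
    (hI₂ : I₂ = ∑ i₁ ∈ Finset.Icc 1 n, ∑ i₂ ∈ Finset.Icc 1 n,
      ∑ i₃ ∈ Finset.Icc 1 n, ∑ i₄ ∈ Finset.Icc 1 n,
        if i₁ < i₂ ∧ i₂ < i₃ ∧ i₃ < i₄ then
          (z i₁ * (starRingEnd ℂ) (z i₂) * z i₃ * (starRingEnd ℂ) (z i₄)).re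
        else 0) :
    I₂ = E₂ / 2 - E₁ ^ 2 / 8 - 2 * A ^ 2 := by
  set v : ℕ → ℂ := fun k => ∑ i ∈ Finset.Icc 1 k, z i with hv
  set a : ℕ → ℂ := fun j => v (j-1) * (starRingEnd ℂ) (z j) with ha
  set Q : ℂ := ∑ j ∈ Finset.Icc 1 n, a j with hQ
  have hvn : v n = 0 := hclosed
  have hv0 : v 0 = 0 := by
    simp only [hv]; rw [Finset.Icc_eq_empty (by omega)]; exact Finset.sum_empty
  have hvs : ∀ j, 1 ≤ j → v j = v (j-1) + z j := by
    intro j hj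
    match j, hj with
    | (k+1), _ =>
      simp only [hv, Nat.add_sub_cancel]
      rw [Finset.sum_Icc_succ_top (by omega)]
  -- the fundamental double sum equals Q
  have hdouble : (∑ i ∈ Finset.Icc 1 n, ∑ j ∈ Finset.Icc 1 n,
      if i < j then z i * (starRingEnd ℂ) (z j) else 0) = Q := by
    rw [hQ, Finset.sum_comm]
    apply Finset.sum_congr rfl; intro j hj
    have hp : ∀ i, (if i < j then z i * (starRingEnd ℂ) (z j) else 0)
        = (if i < j then z i else 0) * (starRingEnd ℂ) (z j) := by
      intro i; split <;> simp
    rw [Finset.sum_congr rfl (fun i _ => hp i), ← Finset.sum_mul, I2Aux.sum_lt hj z]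
  have hconjQ : (∑ i ∈ Finset.Icc 1 n, ∑ j ∈ Finset.Icc 1 n,
      if j < i then z i * (starRingEnd ℂ) (z j) else 0) = (starRingEnd ℂ) Q := by
    rw [← hdouble, Finset.sum_comm]
    simp only [map_sum, apply_ite (starRingEnd ℂ), map_mul, map_zero, Complex.conj_conj]
    apply Finset.sum_congr rfl; intro x _
    apply Finset.sum_congr rfl; intro y _
    exact if_congr Iff.rfl (mul_comm _ _) rfl
  have hQre : 2 * Q.re + E₁ = 0 := by
    have h : (∑ i ∈ Finset.Icc 1 n, z i) * (∑ j ∈ Finset.Icc 1 n, (starRingEnd ℂ) (z j))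
        = (∑ i ∈ Finset.Icc 1 n, ∑ j ∈ Finset.Icc 1 n,
            if i < j then z i * (starRingEnd ℂ) (z j) else 0)
          + (∑ i ∈ Finset.Icc 1 n, z i * (starRingEnd ℂ) (z i))
          + (∑ i ∈ Finset.Icc 1 n, ∑ j ∈ Finset.Icc 1 n,
            if j < i then z i * (starRingEnd ℂ) (z j) else 0) :=
      I2Aux.tri_sum (Finset.Icc 1 n) z (fun j => (starRingEnd ℂ) (z j))
    rw [hclosed, zero_mul, hdouble, hconjQ] at h
    have h2 := congrArg Complex.re h
    simp only [Complex.zero_re, Complex.add_re, Complex.conj_re, Complex.re_sum] at h2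
    have h3 : ∑ j ∈ Finset.Icc 1 n, (z j * (starRingEnd ℂ) (z j)).re
        = ∑ j ∈ Finset.Icc 1 n, Complex.normSq (z j) := by
      apply Finset.sum_congr rfl; intro j _
      rw [Complex.mul_conj]; exact Complex.ofReal_re _
    rw [h3] at h2
    rw [hE₁]; linarith
  have hQim : A = Q.im / 2 := by rw [hA, hdouble]; ring
  have hI : I₂ = (Q*Q).re/2 - (∑ j ∈ Finset.Icc 1 n, (a j * a j).re)/2
      + ∑ j ∈ Finset.Icc 1 n, (a j * (v j * (starRingEnd ℂ) (v j))).re := by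
    have hre : I₂ = (∑ i1 ∈ Finset.Icc 1 n, ∑ i2 ∈ Finset.Icc 1 n,
        ∑ i3 ∈ Finset.Icc 1 n, ∑ i4 ∈ Finset.Icc 1 n,
        if i1 < i2 ∧ i2 < i3 ∧ i3 < i4 then
          z i1 * (starRingEnd ℂ) (z i2) * z i3 * (starRingEnd ℂ) (z i4) else 0).re := by
      rw [hI₂]; simp only [Complex.re_sum, apply_ite Complex.re, Complex.zero_re]
    have hstep1 : (∑ i1 ∈ Finset.Icc 1 n, ∑ i2 ∈ Finset.Icc 1 n,
        ∑ i3 ∈ Finset.Icc 1 n, ∑ i4 ∈ Finset.Icc 1 n,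
        if i1 < i2 ∧ i2 < i3 ∧ i3 < i4 then
          z i1 * (starRingEnd ℂ) (z i2) * z i3 * (starRingEnd ℂ) (z i4) else 0)
        = ∑ i1 ∈ Finset.Icc 1 n, ∑ i2 ∈ Finset.Icc 1 n, ∑ i4 ∈ Finset.Icc 1 n,
          (if i1 < i2 ∧ i2 < i4 then
            z i1 * ((starRingEnd ℂ) (z i2) * ((v (i4-1) - v i2) * (starRingEnd ℂ) (z i4)))
          else 0) := by
      apply Finset.sum_congr rfl; intro i1 _
      apply Finset.sum_congr rfl; intro i2 _
      rw [Finset.sum_comm]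
      apply Finset.sum_congr rfl; intro i4 h4
      by_cases h : i1 < i2 ∧ i2 < i4
      · rw [if_pos h]
        have hp : ∀ i3, (if i1 < i2 ∧ i2 < i3 ∧ i3 < i4 then
              z i1 * (starRingEnd ℂ) (z i2) * z i3 * (starRingEnd ℂ) (z i4) else 0)
            = (if i2 < i3 ∧ i3 < i4 then z i3 else 0)
              * (z i1 * (starRingEnd ℂ) (z i2) * (starRingEnd ℂ) (z i4)) := by
          intro i3; by_cases h3 : i2 < i3 ∧ i3 < i4
          · rw [if_pos h3, if_pos ⟨h.1, h3⟩]; ring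
          · rw [if_neg h3, if_neg (fun hc => h3 ⟨hc.2.1, hc.2.2⟩), zero_mul]
        rw [Finset.sum_congr rfl (fun i3 _ => hp i3), ← Finset.sum_mul,
          I2Aux.sum_between h4 h.2 z]
        have e1 : (∑ i ∈ Finset.Icc 1 (i4-1), z i) = v (i4-1) := rfl
        have e2 : (∑ i ∈ Finset.Icc 1 i2, z i) = v i2 := rfl
        rw [e1, e2]; ring
      · rw [if_neg h]
        apply Finset.sum_eq_zero; intro i3 _
        rw [if_neg]; intro hc; exact h ⟨hc.1, lt_trans hc.2.1 hc.2.2⟩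
    have hstep2 : (∑ i1 ∈ Finset.Icc 1 n, ∑ i2 ∈ Finset.Icc 1 n, ∑ i4 ∈ Finset.Icc 1 n,
          (if i1 < i2 ∧ i2 < i4 then
            z i1 * ((starRingEnd ℂ) (z i2) * ((v (i4-1) - v i2) * (starRingEnd ℂ) (z i4)))
          else 0))
        = ∑ i2 ∈ Finset.Icc 1 n, ∑ i4 ∈ Finset.Icc 1 n,
          (if i2 < i4 then
            v (i2-1) * ((starRingEnd ℂ) (z i2) * ((v (i4-1) - v i2) * (starRingEnd ℂ) (z i4)))
          else 0) := by
      rw [Finset.sum_comm]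
      apply Finset.sum_congr rfl; intro i2 h2
      rw [Finset.sum_comm]
      apply Finset.sum_congr rfl; intro i4 _
      by_cases h : i2 < i4
      · rw [if_pos h]
        have hp : ∀ i1, (if i1 < i2 ∧ i2 < i4 then
              z i1 * ((starRingEnd ℂ) (z i2) * ((v (i4-1) - v i2) * (starRingEnd ℂ) (z i4)))
              else 0)
            = (if i1 < i2 then z i1 else 0)
              * ((starRingEnd ℂ) (z i2) * ((v (i4-1) - v i2) * (starRingEnd ℂ) (z i4))) := by
          intro i1; by_cases h1 : i1 < i2
          · rw [if_pos ⟨h1, h⟩, if_pos h1]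
          · rw [if_neg (fun hc => h1 hc.1), if_neg h1, zero_mul]
        rw [Finset.sum_congr rfl (fun i1 _ => hp i1), ← Finset.sum_mul, I2Aux.sum_lt h2 z]
      · rw [if_neg h]
        apply Finset.sum_eq_zero; intro i1 _
        rw [if_neg]; intro hc; exact h hc.2
    have hsplit : (∑ i2 ∈ Finset.Icc 1 n, ∑ i4 ∈ Finset.Icc 1 n,
          (if i2 < i4 then
            v (i2-1) * ((starRingEnd ℂ) (z i2) * ((v (i4-1) - v i2) * (starRingEnd ℂ) (z i4)))
          else 0))
        = (∑ i2 ∈ Finset.Icc 1 n, ∑ i4 ∈ Finset.Icc 1 n,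
            (if i2 < i4 then a i2 * a i4 else 0))
          - ∑ i2 ∈ Finset.Icc 1 n, ∑ i4 ∈ Finset.Icc 1 n,
            (if i2 < i4 then (a i2 * v i2) * (starRingEnd ℂ) (z i4) else 0) := by
      rw [← Finset.sum_sub_distrib]
      apply Finset.sum_congr rfl; intro i2 _
      rw [← Finset.sum_sub_distrib]
      apply Finset.sum_congr rfl; intro i4 _
      by_cases h : i2 < i4
      · rw [if_pos h, if_pos h, if_pos h,
          show a i2 = v (i2-1) * (starRingEnd ℂ) (z i2) from rfl,
          show a i4 = v (i4-1) * (starRingEnd ℂ) (z i4) from rfl]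
        ring
      · rw [if_neg h, if_neg h, if_neg h]; ring
    have hP1 : (∑ i2 ∈ Finset.Icc 1 n, ∑ i4 ∈ Finset.Icc 1 n,
          (if i2 < i4 then a i2 * a i4 else 0))
        = (Q*Q - ∑ j ∈ Finset.Icc 1 n, a j * a j)/2 := by
      have h : (∑ i ∈ Finset.Icc 1 n, a i) * (∑ j ∈ Finset.Icc 1 n, a j)
          = (∑ i ∈ Finset.Icc 1 n, ∑ j ∈ Finset.Icc 1 n, if i < j then a i * a j else 0)
            + (∑ i ∈ Finset.Icc 1 n, a i * a i)
            + (∑ i ∈ Finset.Icc 1 n, ∑ j ∈ Finset.Icc 1 n, if j < i then a i * a j else 0) :=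
        I2Aux.tri_sum (Finset.Icc 1 n) a a
      rw [← hQ] at h
      have hswap : (∑ i ∈ Finset.Icc 1 n, ∑ j ∈ Finset.Icc 1 n,
            if j < i then a i * a j else 0)
          = ∑ i ∈ Finset.Icc 1 n, ∑ j ∈ Finset.Icc 1 n, if i < j then a i * a j else 0 := by
        rw [Finset.sum_comm]
        exact Finset.sum_congr rfl fun i _ => Finset.sum_congr rfl fun j _ =>
          if_congr Iff.rfl (mul_comm _ _) rfl
      linear_combination (-1/2 : ℂ) * h + (-1/2 : ℂ) * hswap
    have hP2 : (∑ i2 ∈ Finset.Icc 1 n, ∑ i4 ∈ Finset.Icc 1 n,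
          (if i2 < i4 then (a i2 * v i2) * (starRingEnd ℂ) (z i4) else 0))
        = - ∑ j ∈ Finset.Icc 1 n, a j * (v j * (starRingEnd ℂ) (v j)) := by
      rw [← Finset.sum_neg_distrib]
      apply Finset.sum_congr rfl; intro i2 h2
      have hp : ∀ i4, (if i2 < i4 then (a i2 * v i2) * (starRingEnd ℂ) (z i4) else 0)
          = (a i2 * v i2) * (if i2 < i4 then (starRingEnd ℂ) (z i4) else 0) := by
        intro i4; split <;> simp
      rw [Finset.sum_congr rfl (fun i4 _ => hp i4), ← Finset.mul_sum,
        I2Aux.sum_gt h2 (fun l => (starRingEnd ℂ) (z l))]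
      have hc1 : (∑ i ∈ Finset.Icc 1 n, (starRingEnd ℂ) (z i)) = 0 := by
        rw [← map_sum, hclosed, map_zero]
      have hc2 : (∑ i ∈ Finset.Icc 1 i2, (starRingEnd ℂ) (z i)) = (starRingEnd ℂ) (v i2) := by
        rw [← map_sum]
      rw [hc1, hc2]; ring
    rw [hre, hstep1, hstep2, hsplit, hP1, hP2]
    rw [show ((Q*Q - ∑ j ∈ Finset.Icc 1 n, a j * a j)/2 : ℂ)
        = (Q*Q - ∑ j ∈ Finset.Icc 1 n, a j * a j)/((2:ℝ):ℂ) by norm_num]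
    rw [Complex.sub_re, Complex.neg_re, Complex.div_ofReal_re, Complex.sub_re,
      Complex.re_sum, Complex.re_sum]
    ring
  have htel : ∑ j ∈ Finset.Icc 1 n, ((a j * (v j * (starRingEnd ℂ) (v j))).re
      - (a j * a j).re/2) = - (∑ j ∈ Finset.Icc 1 n, (Complex.normSq (z j))^2)/4 := by
    have hpt : ∀ j ∈ Finset.Icc 1 n,
        (a j * (v j * (starRingEnd ℂ) (v j))).re - (a j * a j).re/2
        = (Complex.normSq (v j)^2 - Complex.normSq (v (j-1))^2)/4
          - Complex.normSq (z j)^2/4 := by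
      intro j hj
      have h1 : 1 ≤ j := (Finset.mem_Icc.mp hj).1
      have hz : v j - v (j-1) = z j := by rw [hvs j h1]; ring
      have hp := I2Aux.pointwise (v (j-1)) (v j)
      rw [hz] at hp
      rw [show a j = v (j-1) * (starRingEnd ℂ) (z j) from rfl]
      exact hp
    rw [Finset.sum_congr rfl hpt, Finset.sum_sub_distrib, ← Finset.sum_div, ← Finset.sum_div]
    have htele : ∑ j ∈ Finset.Icc 1 n,
        (Complex.normSq (v j)^2 - Complex.normSq (v (j-1))^2)
        = Complex.normSq (v n)^2 - Complex.normSq (v 0)^2 :=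
      I2Aux.telescope (fun k => Complex.normSq (v k)^2) n
    rw [htele, hvn, hv0]
    simp [Complex.normSq_zero, neg_div]
  have hE2' : E₂ = (E₁^2 - ∑ j ∈ Finset.Icc 1 n, (Complex.normSq (z j))^2)/2 := by
    have h : (∑ i ∈ Finset.Icc 1 n, Complex.normSq (z i))
          * (∑ j ∈ Finset.Icc 1 n, Complex.normSq (z j))
        = (∑ i ∈ Finset.Icc 1 n, ∑ j ∈ Finset.Icc 1 n,
            if i < j then Complex.normSq (z i) * Complex.normSq (z j) else 0)
          + (∑ i ∈ Finset.Icc 1 n, Complex.normSq (z i) * Complex.normSq (z i))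
          + (∑ i ∈ Finset.Icc 1 n, ∑ j ∈ Finset.Icc 1 n,
            if j < i then Complex.normSq (z i) * Complex.normSq (z j) else 0) :=
      I2Aux.tri_sum (Finset.Icc 1 n) (fun i => Complex.normSq (z i))
        (fun i => Complex.normSq (z i))
    have hswap : (∑ i ∈ Finset.Icc 1 n, ∑ j ∈ Finset.Icc 1 n,
          if j < i then Complex.normSq (z i) * Complex.normSq (z j) else 0)
        = ∑ i ∈ Finset.Icc 1 n, ∑ j ∈ Finset.Icc 1 n,
          if i < j then Complex.normSq (z i) * Complex.normSq (z j) else 0 := by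
      rw [Finset.sum_comm]
      exact Finset.sum_congr rfl fun i _ => Finset.sum_congr rfl fun j _ =>
        if_congr Iff.rfl (mul_comm _ _) rfl
    have hd : ∑ j ∈ Finset.Icc 1 n, (Complex.normSq (z j))^2
        = ∑ j ∈ Finset.Icc 1 n, Complex.normSq (z j) * Complex.normSq (z j) :=
      Finset.sum_congr rfl fun j _ => sq (Complex.normSq (z j)) ▸ by ring
    rw [hE₂, hE₁, hd]
    linear_combination (-1/2 : ℝ) * h + (-1/2 : ℝ) * hswap
  have hmul : (Q*Q).re = Q.re * Q.re - Q.im * Q.im := Complex.mul_re Q Q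
  rw [Finset.sum_sub_distrib, ← Finset.sum_div] at htel
  linear_combination hI + hmul/2 + htel - hE2'/2 + (2*Q.re - E₁)/8 * hQre
    + 2*(A + Q.im/2) * hQim
end

section
/- Define partial maps R₁, R₂ on ℂ³ by R₁(z₁, z₂, z₃) := ( conj(z₂)·(z₁+z₂)/(conj(z₁)+conj(z₂)), conj(z₁)·(z₁+z₂)/(conj(z₁)+conj(z₂)), z₃ ) and R₂(z₁, z₂, z₃) := ( z₁, conj(z₃)·(z₂+z₃)/(conj(z₂)+conj(z₃)), conj(z₂)·(z₂+z₃)/(conj(z₂)+conj(z₃)) ). Let v = (z₁, z₂, z₃) ∈ ℂ³ and assume all six of the following sums are nonzero: z₁ + z₂; z₂ + z₃; the sum of the second and third components of R₁(v); the sum of the first and second components of R₂(v); the sum of the second and third components of R₂(R₁(v)); and the sum of the first and second components of R₁(R₂(v)). Then R₁(R₂(R₁(v))) = R₂(R₁(R₂(v))) (the braid relation ρ_i ρ_{i+1} ρ_i = ρ_{i+1} ρ_i ρ_{i+1} for recuttings at adjacent vertices). -/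
open Complex

/-- Recutting at the first of two adjacent vertices, acting on the triple of
consecutive edge vectors `(z₁, z₂, z₃)`. -/
noncomputable def R₁ (v : ℂ × ℂ × ℂ) : ℂ × ℂ × ℂ :=
  ((starRingEnd ℂ) v.2.1 * (v.1 + v.2.1) / ((starRingEnd ℂ) v.1 + (starRingEnd ℂ) v.2.1),
   (starRingEnd ℂ) v.1 * (v.1 + v.2.1) / ((starRingEnd ℂ) v.1 + (starRingEnd ℂ) v.2.1),
   v.2.2)

/-- Recutting at the second of two adjacent vertices, acting on the triple of
consecutive edge vectors `(z₁, z₂, z₃)`. -/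
noncomputable def R₂ (v : ℂ × ℂ × ℂ) : ℂ × ℂ × ℂ :=
  (v.1,
   (starRingEnd ℂ) v.2.2 * (v.2.1 + v.2.2) / ((starRingEnd ℂ) v.2.1 + (starRingEnd ℂ) v.2.2),
   (starRingEnd ℂ) v.2.1 * (v.2.1 + v.2.2) / ((starRingEnd ℂ) v.2.1 + (starRingEnd ℂ) v.2.2))

/-! Recutting replaces an edge pair `(z, w)` by `(e * conj w, e * conj z)` with `e = s / s̄`,
`s = z + w`: the reflections of `w, z` in the line `ℝ s`. Since `e` is multiplicative in `s`
and `e(e * x) = e² e(x)`, the three recuttings in `R₁ R₂ R₁` only multiply the reversed triple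
`(c, b, a)` by `ε`, `εδ`, `δ`, where `δ = e(braidNum a b c)` and `ε = e(braidNum c b a)` are
exchanged by reversing the triple. Reversal conjugates `R₁` into `R₂`, so
`R₂ R₁ R₂` gives the same result. -/

open ComplexConjugate

/-- `e^{2i arg s}` for `s ≠ 0`, and `0` at `0`. -/
noncomputable def phaseSq (s : ℂ) : ℂ := s / conj s

theorem phaseSq_ne_zero {s : ℂ} (hs : s ≠ 0) : phaseSq s ≠ 0 :=
  div_ne_zero hs ((map_ne_zero _).2 hs)

theorem phaseSq_mul (s t : ℂ) : phaseSq (s * t) = phaseSq s * phaseSq t := by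
  simp only [phaseSq, map_mul, mul_div_mul_comm]

theorem phaseSq_div (s t : ℂ) : phaseSq (s / t) = phaseSq s / phaseSq t := by
  simp only [phaseSq, map_div₀, div_div_div_comm]

theorem phaseSq_conj (s : ℂ) : phaseSq (conj s) = (phaseSq s)⁻¹ := by
  rw [phaseSq, phaseSq, conj_conj, inv_div]

theorem conj_phaseSq (s : ℂ) : conj (phaseSq s) = (phaseSq s)⁻¹ := by
  rw [phaseSq, map_div₀, conj_conj, inv_div]

theorem phaseSq_phaseSq (s : ℂ) : phaseSq (phaseSq s) = phaseSq s ^ 2 := by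
  rw [phaseSq, conj_phaseSq, div_inv_eq_mul, sq]

theorem phaseSq_mul_conj_add {s : ℂ} (hs : s ≠ 0) (z w : ℂ) :
    phaseSq s * conj z + w = (s * conj z + conj s * w) / conj s := by
  have : conj s ≠ 0 := (map_ne_zero _).2 hs
  rw [phaseSq]
  field_simp

theorem phaseSq_phaseSq_mul_conj_add {s : ℂ} (hs : s ≠ 0) (z w : ℂ) :
    phaseSq (phaseSq s * conj z + w) = phaseSq (s * conj z + conj s * w) * phaseSq s := by
  rw [phaseSq_mul_conj_add hs, phaseSq_div, phaseSq_conj, div_inv_eq_mul]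

theorem R₁_eq (v : ℂ × ℂ × ℂ) :
    R₁ v = (phaseSq (v.1 + v.2.1) * conj v.2.1, phaseSq (v.1 + v.2.1) * conj v.1, v.2.2) := by
  simp only [R₁, phaseSq, map_add, div_mul_eq_mul_div, mul_comm (v.1 + v.2.1)]

theorem R₂_eq (v : ℂ × ℂ × ℂ) :
    R₂ v = (v.1, phaseSq (v.2.1 + v.2.2) * conj v.2.2, phaseSq (v.2.1 + v.2.2) * conj v.2.1) := by
  simp only [R₂, phaseSq, map_add, div_mul_eq_mul_div, mul_comm (v.2.1 + v.2.2)]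

def revTriple (v : ℂ × ℂ × ℂ) : ℂ × ℂ × ℂ := (v.2.2, v.2.1, v.1)

theorem R₂_eq_revTriple_R₁_revTriple (v : ℂ × ℂ × ℂ) : R₂ v = revTriple (R₁ (revTriple v)) := by
  simp only [R₁_eq, R₂_eq, revTriple, add_comm v.2.2]

theorem R₂_R₁_R₂ (a b c : ℂ) : R₂ (R₁ (R₂ (a, b, c))) = revTriple (R₁ (R₂ (R₁ (c, b, a)))) := by
  simp only [R₂_eq_revTriple_R₁_revTriple]
  rfl

/-- `braidNum a b c / conj (a + b)` is `z₂ + z₃` after recutting `(a, b, c)` at the first vertex. -/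
def braidNum (a b c : ℂ) : ℂ := (a + b) * conj a + conj (a + b) * c

theorem braidNum_ne_zero {a b c : ℂ} (hab : a + b ≠ 0)
    (h : (R₁ (a, b, c)).2.1 + (R₁ (a, b, c)).2.2 ≠ 0) : braidNum a b c ≠ 0 := by
  rw [R₁_eq, phaseSq_mul_conj_add hab] at h
  exact left_ne_zero_of_mul h

theorem R₁_R₂_R₁ {a b c : ℂ} (hab : a + b ≠ 0) (hm : braidNum a b c ≠ 0) :
    R₁ (R₂ (R₁ (a, b, c))) = (phaseSq (braidNum c b a) * c,
      phaseSq (braidNum c b a) * phaseSq (braidNum a b c) * b, phaseSq (braidNum a b c) * a) := by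
  have hu : phaseSq (a + b) ≠ 0 := phaseSq_ne_zero hab
  have hum : phaseSq (braidNum a b c) ≠ 0 := phaseSq_ne_zero hm
  have step₂ : phaseSq (phaseSq (a + b) * conj a + c) = phaseSq (braidNum a b c) * phaseSq (a + b) :=
    phaseSq_phaseSq_mul_conj_add hab a c
  have step₃ : phaseSq (phaseSq (a + b) * conj b + phaseSq (braidNum a b c) * phaseSq (a + b) * conj c)
      = phaseSq (a + b) * phaseSq (braidNum a b c) * phaseSq (braidNum c b a) := by
    have braidNum_rel : braidNum a b c * conj c + conj (braidNum a b c) * conj b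
        = braidNum c b a * conj (a + b) := by
      simp only [braidNum, map_add, map_mul, conj_conj]; ring
    calc _ = phaseSq (phaseSq (a + b) * (phaseSq (braidNum a b c) * conj c + conj b)) := by
          congr 1; ring
      _ = phaseSq (a + b) ^ 2 * (phaseSq (braidNum c b a) * (phaseSq (a + b))⁻¹
            * phaseSq (braidNum a b c)) := by
        rw [phaseSq_mul, phaseSq_phaseSq, phaseSq_phaseSq_mul_conj_add hm, braidNum_rel, phaseSq_mul,
          phaseSq_conj]
      _ = _ := by field_simp
  simp only [R₁_eq, R₂_eq, step₂, step₃, map_mul, conj_phaseSq, conj_conj]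
  ext <;> field_simp

theorem braid_relation_general (v : ℂ × ℂ × ℂ)
    (h₁ : v.1 + v.2.1 ≠ 0)
    (h₂ : v.2.1 + v.2.2 ≠ 0)
    (h₃ : (R₁ v).2.1 + (R₁ v).2.2 ≠ 0)
    (h₄ : (R₂ v).1 + (R₂ v).2.1 ≠ 0) :
    R₁ (R₂ (R₁ v)) = R₂ (R₁ (R₂ v)) := by
  obtain ⟨a, b, c⟩ := v
  have hcb : c + b ≠ 0 := by rwa [add_comm]
  have h₄' : (R₁ (c, b, a)).2.1 + (R₁ (c, b, a)).2.2 ≠ 0 := by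
    rwa [R₂_eq_revTriple_R₁_revTriple, add_comm] at h₄
  rw [R₂_R₁_R₂, R₁_R₂_R₁ h₁ (braidNum_ne_zero h₁ h₃), R₁_R₂_R₁ hcb (braidNum_ne_zero hcb h₄')]
  simp only [revTriple]
  ring_nf

/-- The braid relation `ρ_i ρ_{i+1} ρ_i = ρ_{i+1} ρ_i ρ_{i+1}` for recuttings at two
adjacent vertices, wherever all the intermediate recuttings are defined. -/
theorem braid_relation (v : ℂ × ℂ × ℂ)
    (h₁ : v.1 + v.2.1 ≠ 0)
    (h₂ : v.2.1 + v.2.2 ≠ 0)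
    (h₃ : (R₁ v).2.1 + (R₁ v).2.2 ≠ 0)
    (h₄ : (R₂ v).1 + (R₂ v).2.1 ≠ 0)
    (h₅ : (R₂ (R₁ v)).2.1 + (R₂ (R₁ v)).2.2 ≠ 0)
    (h₆ : (R₁ (R₂ v)).1 + (R₁ (R₂ v)).2.1 ≠ 0) :
    R₁ (R₂ (R₁ v)) = R₂ (R₁ (R₂ v)) :=
  braid_relation_general v h₁ h₂ h₃ h₄
end
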